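/- arXiv:1904.06971 — 5 statements merged into one kernel-verified Lean document; each statement's English description precedes it below -/
import Mathlib

section
/- Seminorm kernel identification: fix an index i and let ℐ(i) = {j : supp(N_i) ∩ supp(N_j) ≠ ∅} for a NURBS partition-of-unity basis {N_j}_{j=1}^N. For coefficient vectors v ∈ ℝ^N define |v|_{ℐ(i)} = (Σ_{j∈ℐ(i)} |v_i − v_j|²)^{1/2} and |v|_{N_i} = ||∇v_h||_{L²(supp(N_i))}, where v_h = Σ_j v_j N_j. Then |v|_{ℐ(i)} = 0 if and only if |v|_{N_i} = 0, and both hold precisely when v_j = v_i for all j ∈ ℐ(i). -/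
open scoped BigOperators Classical
open MeasureTheory

noncomputable def dirD {n : ℕ} (i : Fin n) (f : (Fin n → ℝ) → ℝ) : (Fin n → ℝ) → ℝ :=
  fun x => fderiv ℝ f x (Pi.single i 1)

lemma aux_const_of_fderiv_zero {E : Type*} [NormedAddCommGroup E] [NormedSpace ℝ E]
    {f : E → ℝ} {S : Set E} (hS : IsOpen S) (hconn : IsPreconnected S)
    (hf : Differentiable ℝ f) (h0 : ∀ x ∈ S, fderiv ℝ f x = 0)
    {x y : E} (hx : x ∈ S) (hy : y ∈ S) : f y = f x := by
  set U : Set E := {z | z ∈ S ∧ f z = f x} with hU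
  set V : Set E := {z | z ∈ S ∧ f z ≠ f x} with hV
  have hballconst : ∀ z ∈ S, ∀ ε > 0, Metric.ball z ε ⊆ S →
      ∀ w ∈ Metric.ball z ε, f w = f z := by
    intro z hz ε hε hball w hw
    have hconv : Convex ℝ (Metric.ball z ε) := convex_ball z ε
    refine hconv.is_const_of_fderivWithin_eq_zero (hf.differentiableOn) ?_ hw
      (Metric.mem_ball_self hε)
    intro u hu
    rw [fderivWithin_of_isOpen Metric.isOpen_ball hu]
    exact h0 u (hball hu)
  have hUopen : IsOpen U := by
    rw [Metric.isOpen_iff]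
    rintro z ⟨hzS, hzf⟩
    obtain ⟨ε, hε, hball⟩ := Metric.isOpen_iff.1 hS z hzS
    exact ⟨ε, hε, fun w hw => ⟨hball hw, (hballconst z hzS ε hε hball w hw).trans hzf⟩⟩
  have hVopen : IsOpen V := by
    have : V = S ∩ f ⁻¹' {f x}ᶜ := by
      ext z; simp only [hV, Set.mem_inter_iff, Set.mem_setOf_eq, Set.mem_preimage, Set.mem_compl_iff, Set.mem_singleton_iff]
    rw [this]
    exact hS.inter ((isOpen_compl_singleton).preimage hf.continuous)
  have hdisj : Disjoint U V := by
    rw [Set.disjoint_iff]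
    rintro z ⟨⟨_, h1⟩, ⟨_, h2⟩⟩
    exact absurd h1 h2
  have hcover : S ⊆ U ∪ V := by
    intro z hz
    by_cases h : f z = f x
    · exact Or.inl ⟨hz, h⟩
    · exact Or.inr ⟨hz, h⟩
  have := hconn.subset_left_of_subset_union hUopen hVopen hdisj hcover ⟨x, hx, hx, rfl⟩
  exact (this hy).2

/-- **Seminorm kernel identification.**  Let `{N_j}_{j=1}^N` be a linearly independent
family of nonnegative `C¹` functions forming a partition of unity, fix `i`, and let
`ℐ(i) = {j : supp(N_i) ∩ supp(N_j) ≠ ∅}`.  For coefficient vectors `v ∈ ℝ^N` set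
`|v|_{ℐ(i)} = (Σ_{j∈ℐ(i)} |v_i − v_j|²)^{1/2}` and
`|v|_{N_i} = ‖∇v_h‖_{L²(supp N_i)}` with `v_h = Σ_j v_j N_j`.  Then `|v|_{ℐ(i)} = 0` iff
`|v|_{N_i} = 0`, and both hold precisely when `v_j = v_i` for all `j ∈ ℐ(i)`. -/
theorem stmt_12 (d Nn : ℕ) (N : Fin Nn → (Fin d → ℝ) → ℝ)
    (hC1 : ∀ j, ContDiff ℝ 1 (N j))
    (hnonneg : ∀ j x, 0 ≤ N j x)
    (hpu : ∀ x, ∑ j, N j x = 1)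
    (i : Fin Nn)
    (hbd : Bornology.IsBounded {x | N i x ≠ 0})
    (hconn : IsPreconnected {x | N i x ≠ 0})
    -- the restrictions `{N_j|_{supp N_i}}_{j ∈ ℐ(i)}` are linearly independent
    (hindep : ∀ c : Fin Nn → ℝ,
      (∀ x, N i x ≠ 0 →
        (∑ j ∈ Finset.univ.filter (fun j => ∃ x', N i x' ≠ 0 ∧ N j x' ≠ 0),
          c j * N j x) = 0) →
      ∀ j, (∃ x', N i x' ≠ 0 ∧ N j x' ≠ 0) → c j = 0) :
    ∀ v : Fin Nn → ℝ,
      (Real.sqrt (∑ j ∈ Finset.univ.filter (fun j => ∃ x', N i x' ≠ 0 ∧ N j x' ≠ 0),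
          (v i - v j) ^ 2) = 0 ↔
        Real.sqrt (∫ x in {x | N i x ≠ 0},
          ∑ k, (dirD k (fun x' => ∑ j, v j * N j x') x) ^ 2) = 0) ∧
      (Real.sqrt (∑ j ∈ Finset.univ.filter (fun j => ∃ x', N i x' ≠ 0 ∧ N j x' ≠ 0),
          (v i - v j) ^ 2) = 0 ↔
        ∀ j ∈ Finset.univ.filter (fun j => ∃ x', N i x' ≠ 0 ∧ N j x' ≠ 0), v j = v i) := by
  intro v
  set S : Set (Fin d → ℝ) := {x | N i x ≠ 0} with hS
  set ℐ : Finset (Fin Nn) := Finset.univ.filter (fun j => ∃ x', N i x' ≠ 0 ∧ N j x' ≠ 0)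
    with hℐ
  set vh : (Fin d → ℝ) → ℝ := fun x' => ∑ j, v j * N j x' with hvh
  have hSopen : IsOpen S := by
    have : S = (N i) ⁻¹' {(0 : ℝ)}ᶜ := by ext x; simp [hS]
    rw [this]
    exact isOpen_compl_singleton.preimage (hC1 i).continuous
  -- filling in the sum over ℐ
  have hfill : ∀ (c : Fin Nn → ℝ), ∀ x ∈ S, (∑ j ∈ ℐ, c j * N j x) = ∑ j, c j * N j x := by
    intro c x hx
    refine Finset.sum_filter_of_ne ?_
    intro j _ hne
    have : N j x ≠ 0 := fun h => hne (by rw [h, mul_zero])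
    exact ⟨x, hx, this⟩
  have hvh_cd : ContDiff ℝ 1 vh := ContDiff.sum fun j _ => contDiff_const.mul (hC1 j)
  have hvh_diff : Differentiable ℝ vh := hvh_cd.differentiable one_ne_zero
  -- constancy of vh on S given kernel condition
  have hvconst : (∀ j ∈ ℐ, v j = v i) → ∀ x ∈ S, vh x = v i := by
    intro hall x hx
    have h1 : vh x = ∑ j ∈ ℐ, v j * N j x := (hfill v x hx).symm
    have h2 : (∑ j ∈ ℐ, v j * N j x) = ∑ j ∈ ℐ, v i * N j x :=
      Finset.sum_congr rfl fun j hj => by rw [hall j hj]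
    have h3 : (∑ j ∈ ℐ, v i * N j x) = ∑ j, v i * N j x := hfill (fun _ => v i) x hx
    rw [h1, h2, h3, ← Finset.mul_sum, hpu, mul_one]
  -- the second iff
  have hsum_nonneg : (0:ℝ) ≤ ∑ j ∈ ℐ, (v i - v j) ^ 2 :=
    Finset.sum_nonneg fun j _ => sq_nonneg _
  have h2 : Real.sqrt (∑ j ∈ ℐ, (v i - v j) ^ 2) = 0 ↔ ∀ j ∈ ℐ, v j = v i := by
    rw [Real.sqrt_eq_zero hsum_nonneg]
    constructor
    · intro h j hj
      have := (Finset.sum_eq_zero_iff_of_nonneg fun j _ => sq_nonneg (v i - v j)).1 h j hj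
      have := pow_eq_zero_iff (n := 2) (by norm_num) |>.1 this
      linarith [sub_eq_zero.1 this]
    · intro h
      exact Finset.sum_eq_zero fun j hj => by rw [h j hj, sub_self, zero_pow (by norm_num)]
  refine ⟨?_, h2⟩
  constructor
  · -- kernel condition ⇒ integral seminorm zero
    intro h
    have hall := h2.1 h
    have hzero : ∀ x ∈ S, (∑ k, (dirD k vh x) ^ 2) = 0 := by
      intro x hx
      have hev : vh =ᶠ[nhds x] fun _ => v i := by
        filter_upwards [hSopen.mem_nhds hx] with y hy using hvconst hall y hy
      have hfd : fderiv ℝ vh x = 0 := by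
        rw [hev.fderiv_eq, fderiv_fun_const]
        rfl
      refine Finset.sum_eq_zero fun k _ => ?_
      simp [dirD, hfd]
    have : (∫ x in S, ∑ k, (dirD k vh x) ^ 2) = 0 := by
      rw [setIntegral_congr_fun hSopen.measurableSet (g := fun _ => (0:ℝ))
        (fun x hx => hzero x hx)]
      simp
    rw [this, Real.sqrt_zero]
  · -- integral seminorm zero ⇒ kernel condition
    intro hI
    refine h2.2 ?_
    rcases Set.eq_empty_or_nonempty S with hSe | ⟨x₀, hx₀⟩
    · intro j hj
      obtain ⟨x', hx', _⟩ := (Finset.mem_filter.1 hj).2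
      exact absurd (Set.eq_empty_iff_forall_notMem.1 hSe x') (fun h => h hx')
    · set g : (Fin d → ℝ) → ℝ := fun x => ∑ k, (dirD k vh x) ^ 2 with hg
      have hgc : Continuous g := by
        refine continuous_finset_sum _ fun k _ => ?_
        exact ((ContinuousLinearMap.apply ℝ ℝ (Pi.single k (1:ℝ))).continuous.comp
          (hvh_cd.continuous_fderiv one_ne_zero)).pow 2
      have hgnn : ∀ x, 0 ≤ g x := fun x => Finset.sum_nonneg fun k _ => sq_nonneg _
      have hint : IntegrableOn g S := by
        have hcpt : IsCompact (closure S) := hbd.isCompact_closure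
        exact (hgc.continuousOn.integrableOn_compact hcpt).mono_set subset_closure
      have hI0 : (∫ x in S, g x) = 0 := by
        have h1 : (0:ℝ) ≤ ∫ x in S, g x :=
          setIntegral_nonneg hSopen.measurableSet fun x _ => hgnn x
        have h2' := Real.sqrt_eq_zero'.1 hI
        linarith
      have hae : g =ᵐ[volume.restrict S] 0 :=
        (integral_eq_zero_iff_of_nonneg_ae (Filter.Eventually.of_forall hgnn) hint).1 hI0
      have hgS0 : ∀ x ∈ S, g x = 0 := by
        by_contra hcon
        push_neg at hcon
        obtain ⟨x₁, hx₁, hgx₁⟩ := hcon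
        set W : Set (Fin d → ℝ) := S ∩ g ⁻¹' {(0:ℝ)}ᶜ with hW
        have hWopen : IsOpen W :=
          hSopen.inter (isOpen_compl_singleton.preimage hgc)
        have hWne : W.Nonempty := ⟨x₁, hx₁, hgx₁⟩
        have hWpos : 0 < volume W := hWopen.measure_pos volume hWne
        have hm : MeasurableSet {x | g x ≠ 0} := by
          have : {x | g x ≠ 0} = g ⁻¹' {(0:ℝ)}ᶜ := by ext; simp
          rw [this]
          exact (isOpen_compl_singleton.preimage hgc).measurableSet
        have : volume ({x | g x ≠ 0} ∩ S) = 0 := by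
          have h' := ae_iff.1 hae
          simp only [Pi.zero_apply] at h'
          rwa [Measure.restrict_apply hm] at h'
        have hWsub : W = {x | g x ≠ 0} ∩ S := by
          ext x; simp [hW, Set.mem_inter_iff, and_comm]
        rw [hWsub.symm] at this
        exact absurd this hWpos.ne'
      have hfd0 : ∀ x ∈ S, fderiv ℝ vh x = 0 := by
        intro x hx
        have hk : ∀ k, fderiv ℝ vh x (Pi.single k 1) = 0 := by
          intro k
          have := (Finset.sum_eq_zero_iff_of_nonneg fun k _ =>
            sq_nonneg (dirD k vh x)).1 (hgS0 x hx) k (Finset.mem_univ k)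
          exact pow_eq_zero_iff (n := 2) (by norm_num) |>.1 this
        ext y
        rw [pi_eq_sum_univ y, map_sum]
        have hsingle : ∀ k : Fin d, (fun j => if k = j then (1:ℝ) else 0) = Pi.single k 1 := by
          intro k; ext j
          rw [Pi.single_apply]
          by_cases h : j = k
          · simp [h]
          · have h' : ¬ k = j := fun hc => h hc.symm
            simp [h, h']
        simp only [ContinuousLinearMap.zero_apply]
        refine Finset.sum_eq_zero fun k _ => ?_
        rw [_root_.map_smul, hsingle k, hk, smul_zero]
      have hconstS : ∀ x ∈ S, vh x = vh x₀ := fun x hx =>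
        aux_const_of_fderiv_zero hSopen hconn hvh_diff hfd0 hx₀ hx
      have hker : ∀ j, (∃ x', N i x' ≠ 0 ∧ N j x' ≠ 0) → v j - vh x₀ = 0 := by
        refine hindep (fun j => v j - vh x₀) ?_
        intro x hx
        have hxS : x ∈ S := hx
        have e1 : (∑ j ∈ ℐ, (v j - vh x₀) * N j x)
            = (∑ j ∈ ℐ, v j * N j x) - ∑ j ∈ ℐ, vh x₀ * N j x := by
          rw [← Finset.sum_sub_distrib]
          exact Finset.sum_congr rfl fun j _ => by ring
        have e2 : (∑ j ∈ ℐ, v j * N j x) = vh x := hfill v x hxS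
        have e3 : (∑ j ∈ ℐ, vh x₀ * N j x) = vh x₀ := by
          rw [hfill (fun _ => vh x₀) x hxS, ← Finset.mul_sum, hpu, mul_one]
        rw [e1, e2, e3, hconstS x hxS, sub_self]
      intro j hj
      have hji := (Finset.mem_filter.1 hj).2
      have hvj : v j = vh x₀ := by have := hker j hji; linarith
      have hvi : v i = vh x₀ := by
        have := hker i ⟨x₀, hx₀, hx₀⟩
        linarith
      rw [hvj, hvi]
end

section
/- A priori H¹ error estimate for the surrogate Galerkin solution: under the consistency bound |a(v,w) − ã(v,w)| ≤ C_4 H^{q+1} ||∇v||_0 ||∇w||_0 on V_{h,0}, the standard Galerkin estimate ||u − u_h||_1 ≤ C_5 h^p ||u||_{p+1}, and for any θ > 1, the surrogate solution ũ_h (solving ã(ũ_h, v_h) = F(v_h) for all v_h ∈ V_{h,0}) satisfies ||u − ũ_h||_1 ≤ C_5 h^p ||u||_{p+1} + θ α^{-1} C_4 H^{q+1} ||∇u||_0 for all sufficiently small H > 0. -/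
/-- **A priori `H¹` error estimate for the surrogate Galerkin solution.**  Let `u` solve
`a(u,v) = F(v)`, let `u_h ∈ V_{h,0}` be its Galerkin approximation satisfying
`‖u − u_h‖₁ ≤ C₅ h^p ‖u‖_{p+1}`, and for each `H > 0` let `ũ_H ∈ V_{h,0}` solve the
surrogate problem `ã_H(ũ_H, v_h) = F(v_h)` for all `v_h ∈ V_{h,0}`.  Assume the
consistency bound `|a(v,w) − ã_H(v,w)| ≤ C₄ H^{q+1} ‖∇v‖₀ ‖∇w‖₀` on `V_{h,0}`, stability
`‖∇u_h‖₀ ≤ ‖∇u‖₀`, and coercivity of `ã_H` with constants `α̃(H) → α > 0` as `H → 0⁺`.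
Then for any `θ > 1`,
`‖u − ũ_H‖₁ ≤ C₅ h^p ‖u‖_{p+1} + θ α⁻¹ C₄ H^{q+1} ‖∇u‖₀` for all sufficiently small
`H > 0`. -/
theorem stmt_16 {V : Type*} [AddCommGroup V] [Module ℝ V]
    (Vh0 : Submodule ℝ V)
    (a : V → V → ℝ) (at_ : ℝ → V → V → ℝ)
    (norm1 gnorm normp1 : V → ℝ)
    (u uh : V) (ut : ℝ → V)
    (p q : ℕ) (h C4 C5 α : ℝ) (αt : ℝ → ℝ)
    (hα : 0 < α) (hC4 : 0 < C4) (hC5 : 0 ≤ C5) (hh : 0 < h)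
    -- bilinearity and symmetry of `a` and of each `ã_H`
    (haadd : ∀ v w z, a (v + w) z = a v z + a w z)
    (hasymm : ∀ v w, a v w = a w v)
    (htadd : ∀ H, 0 < H → ∀ v w z, at_ H (v + w) z = at_ H v z + at_ H w z)
    (htsymm : ∀ H, 0 < H → ∀ v w, at_ H v w = at_ H w v)
    -- seminorm properties of the `H¹` norm and `‖∇·‖₀`
    (hn1tri : ∀ v w, norm1 (v + w) ≤ norm1 v + norm1 w)
    (hgn : ∀ v, gnorm v ≤ norm1 v)
    (hgnn : ∀ v, 0 ≤ gnorm v)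
    -- the Galerkin solution and its quasi-optimal error estimate
    (huh : uh ∈ Vh0)
    (hgal : ∀ v ∈ Vh0, a uh v = a u v)
    (hgalest : norm1 (u - uh) ≤ C5 * h ^ p * normp1 u)
    (hstab : gnorm uh ≤ gnorm u)
    -- the surrogate solutions
    (hut : ∀ H, 0 < H → ut H ∈ Vh0 ∧ ∀ v ∈ Vh0, at_ H (ut H) v = a u v)
    -- consistency of the surrogate forms
    (hcons : ∀ H, 0 < H → ∀ v ∈ Vh0, ∀ w ∈ Vh0,
      |a v w - at_ H v w| ≤ C4 * H ^ (q + 1) * gnorm v * gnorm w)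
    -- coercivity of the surrogate forms with constants tending to `α`
    (hcoer : ∀ H, 0 < H → ∀ v ∈ Vh0, αt H * (norm1 v) ^ 2 ≤ at_ H v v)
    (hαt : Filter.Tendsto αt (nhdsWithin 0 (Set.Ioi 0)) (nhds α)) :
    ∀ θ : ℝ, 1 < θ → ∃ H0 : ℝ, 0 < H0 ∧ ∀ H : ℝ, 0 < H → H < H0 →
      norm1 (u - ut H) ≤
        C5 * h ^ p * normp1 u + θ * α⁻¹ * C4 * H ^ (q + 1) * gnorm u := by
  intro θ hθ
  have hθ0 : (0:ℝ) < θ := lt_trans one_pos hθ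
  have hαθ : α / θ < α := by
    rw [div_lt_iff₀ hθ0]; nlinarith
  have hαθ0 : 0 < α / θ := div_pos hα hθ0
  have hev : ∀ᶠ H in nhdsWithin 0 (Set.Ioi 0), α / θ < αt H :=
    hαt.eventually (eventually_gt_nhds hαθ)
  rw [Filter.eventually_iff, mem_nhdsGT_iff_exists_Ioo_subset] at hev
  obtain ⟨H0, hH0, hsub⟩ := hev
  refine ⟨H0, hH0, fun H hH1 hH2 => ?_⟩
  have hαtH : α / θ < αt H := hsub ⟨hH1, hH2⟩
  obtain ⟨hmem, hsurr⟩ := hut H hH1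
  set e := uh - ut H with he
  have hemem : e ∈ Vh0 := Submodule.sub_mem _ huh hmem
  -- ã(e,e) = ã(uh,e) - a(uh,e)
  have hsplit : at_ H uh e = at_ H e e + at_ H (ut H) e := by
    have := htadd H hH1 e (ut H) e
    rw [he] at this ⊢; simpa using this
  have hkey : at_ H e e = at_ H uh e - a uh e := by
    have h1 : at_ H (ut H) e = a u e := hsurr e hemem
    have h2 : a uh e = a u e := hgal e hemem
    rw [hsplit, h1, h2]; ring
  -- bound ã(e,e)
  have habs := hcons H hH1 uh huh e hemem
  have hbound : at_ H e e ≤ C4 * H ^ (q + 1) * gnorm u * norm1 e := by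
    have h1 : at_ H e e ≤ |a uh e - at_ H uh e| := by
      rw [hkey]
      calc at_ H uh e - a uh e ≤ |at_ H uh e - a uh e| := le_abs_self _
        _ = |a uh e - at_ H uh e| := abs_sub_comm _ _
    have h2 : C4 * H ^ (q + 1) * gnorm uh * gnorm e
        ≤ C4 * H ^ (q + 1) * gnorm u * norm1 e := by
      have hpos : 0 ≤ C4 * H ^ (q + 1) := by positivity
      have := mul_le_mul hstab (hgn e) (hgnn e) (le_trans (hgnn u) (le_refl _))
      nlinarith [hgnn uh, hgnn e, hgn e, hgnn u, mul_le_mul_of_nonneg_left this hpos]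
    linarith
  have hcoe := hcoer H hH1 e hemem
  have hne : 0 ≤ norm1 e := le_trans (hgnn e) (hgn e)
  -- conclude norm1 e ≤ θ α⁻¹ C4 H^{q+1} gnorm u
  have hK : (0:ℝ) ≤ C4 * H ^ (q + 1) * gnorm u :=
    mul_nonneg (by positivity) (hgnn u)
  have hestep : norm1 e ≤ θ * α⁻¹ * C4 * H ^ (q + 1) * gnorm u := by
    rcases eq_or_lt_of_le hne with h0 | h0
    · rw [← h0]; exact mul_nonneg (by positivity) (hgnn u)
    · have h1 : αt H * norm1 e ≤ C4 * H ^ (q + 1) * gnorm u := by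
        have := le_trans hcoe hbound
        nlinarith
      have h2 : (α / θ) * norm1 e ≤ C4 * H ^ (q + 1) * gnorm u := by
        nlinarith
      rw [div_mul_eq_mul_div, div_le_iff₀ hθ0] at h2
      nlinarith [mul_le_mul_of_nonneg_left h2 (inv_nonneg.mpr hα.le),
        inv_mul_cancel₀ hα.ne']
  -- triangle inequality
  have htri : norm1 (u - ut H) ≤ norm1 (u - uh) + norm1 e := by
    have : u - ut H = (u - uh) + e := by rw [he]; abel
    rw [this]; exact hn1tri _ _
  linarith [hgalest]
end

section
/- Eigenvalue perturbation bound for surrogate generalized eigenvalue problems: let λ_h^{(k)} and λ̃_h^{(k)} be the k-th eigenvalues (min-max characterization) of the generalized eigenproblems a(u,v) = λ m(u,v) and ã(u,v) = λ̃ m̃(u,v) on a finite-dimensional space V_h, where |a(v,v) − ã(v,v)| ≤ C_4 H^{q+1} a(v,v) and |m(w,w) − m̃(w,w)| ≤ C_7 H^{q+1} m(w,w) for all v, w ∈ V_h. Then for any θ > 1 and all sufficiently small H > 0, |λ_h^{(k)} − λ̃_h^{(k)}| ≤ λ_h^{(k)} · θ (C_4 + C_7) H^{q+1}. -/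
open scoped BigOperators
open Matrix

/-- The `k`-th eigenvalue of the generalized eigenproblem associated with the quadratic
forms `a`, `m`, via the Courant–Fischer min-max characterization:
`λ^{(k)} = min_{dim E = k} max_{v ∈ E, v ≠ 0} a(v,v)/m(v,v)`. -/
noncomputable def minmaxEig (Nd : ℕ) (a m : (Fin Nd → ℝ) → ℝ) (k : ℕ) : ℝ :=
  sInf {r : ℝ | ∃ E : Submodule ℝ (Fin Nd → ℝ), Module.finrank ℝ E = k ∧
    r = sSup ((fun v => a v / m v) '' {v : Fin Nd → ℝ | v ∈ E ∧ v ≠ 0})}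

namespace Stmt17Aux

lemma quad_smul {Nd : ℕ} (A : Matrix (Fin Nd) (Fin Nd) ℝ) (s : ℝ) (v : Fin Nd → ℝ) :
    (s • v) ⬝ᵥ A *ᵥ (s • v) = s ^ 2 * (v ⬝ᵥ A *ᵥ v) := by
  rw [Matrix.mulVec_smul, dotProduct_smul, smul_dotProduct, smul_eq_mul, smul_eq_mul]
  ring

lemma quad_pos {Nd : ℕ} {A : Matrix (Fin Nd) (Fin Nd) ℝ} (hA : A.PosDef)
    {v : Fin Nd → ℝ} (hv : v ≠ 0) : 0 < v ⬝ᵥ A *ᵥ v := by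
  simpa using hA.dotProduct_mulVec_pos hv

lemma dom {Nd : ℕ} (A M : Matrix (Fin Nd) (Fin Nd) ℝ) (hA : A.PosDef) (hM : M.PosDef) :
    ∃ c : ℝ, 0 < c ∧ ∀ v, v ⬝ᵥ A *ᵥ v ≤ c * (v ⬝ᵥ M *ᵥ v) := by
  rcases isEmpty_or_nonempty (Fin Nd) with hE | hE
  · exact ⟨1, one_pos, fun v => by simp [dotProduct]⟩
  · have hcA : Continuous fun v : Fin Nd → ℝ => v ⬝ᵥ A *ᵥ v :=
      continuous_id.dotProduct (continuous_const.matrix_mulVec continuous_id)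
    have hcM : Continuous fun v : Fin Nd → ℝ => v ⬝ᵥ M *ᵥ v :=
      continuous_id.dotProduct (continuous_const.matrix_mulVec continuous_id)
    have hsne : (Metric.sphere (0 : Fin Nd → ℝ) 1).Nonempty :=
      NormedSpace.sphere_nonempty.mpr zero_le_one
    have hnz : ∀ v ∈ Metric.sphere (0 : Fin Nd → ℝ) 1, v ≠ 0 := by
      intro v hv
      have : ‖v‖ = 1 := by simpa using hv
      intro h; rw [h] at this; simp at this
    have hcg : ContinuousOn (fun v : Fin Nd → ℝ => (v ⬝ᵥ A *ᵥ v) / (v ⬝ᵥ M *ᵥ v))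
        (Metric.sphere (0 : Fin Nd → ℝ) 1) :=
      hcA.continuousOn.div hcM.continuousOn
        (fun v hv => ne_of_gt (quad_pos hM (hnz v hv)))
    obtain ⟨x0, hx0, hmax⟩ := (isCompact_sphere (0 : Fin Nd → ℝ) 1).exists_isMaxOn hsne hcg
    have hx0nz := hnz x0 hx0
    refine ⟨(x0 ⬝ᵥ A *ᵥ x0) / (x0 ⬝ᵥ M *ᵥ x0),
      div_pos (quad_pos hA hx0nz) (quad_pos hM hx0nz), fun v => ?_⟩
    by_cases hv : v = 0
    · simp [hv]
    · set w : Fin Nd → ℝ := ‖v‖⁻¹ • v with hw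
      have hnv : ‖v‖ ≠ 0 := norm_ne_zero_iff.mpr hv
      have hws : w ∈ Metric.sphere (0 : Fin Nd → ℝ) 1 := by
        simp [hw, norm_smul, inv_mul_cancel₀ hnv]
      have hveq : v = ‖v‖ • w := by
        rw [hw, smul_smul, mul_inv_cancel₀ hnv, one_smul]
      have hgw := hmax hws
      have hMw : 0 < w ⬝ᵥ M *ᵥ w := quad_pos hM (hnz w hws)
      have hAle : w ⬝ᵥ A *ᵥ w ≤ (x0 ⬝ᵥ A *ᵥ x0) / (x0 ⬝ᵥ M *ᵥ x0) * (w ⬝ᵥ M *ᵥ w) :=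
        (div_le_iff₀ hMw).mp hgw
      have e1 := quad_smul A ‖v‖ w
      have e2 := quad_smul M ‖v‖ w
      rw [← hveq] at e1 e2
      calc v ⬝ᵥ A *ᵥ v = ‖v‖ ^ 2 * (w ⬝ᵥ A *ᵥ w) := e1
        _ ≤ ‖v‖ ^ 2 * ((x0 ⬝ᵥ A *ᵥ x0) / (x0 ⬝ᵥ M *ᵥ x0) * (w ⬝ᵥ M *ᵥ w)) := by
            apply mul_le_mul_of_nonneg_left hAle (by positivity)
        _ = (x0 ⬝ᵥ A *ᵥ x0) / (x0 ⬝ᵥ M *ᵥ x0) * (v ⬝ᵥ M *ᵥ v) := by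
            rw [e2]; ring

lemma exists_subk {Nd : ℕ} (k : ℕ) (hkN : k ≤ Nd) :
    ∃ E : Submodule ℝ (Fin Nd → ℝ), Module.finrank ℝ E = k := by
  have hli : LinearIndependent ℝ
      (fun i : Fin k => (Pi.basisFun ℝ (Fin Nd)) (Fin.castLE hkN i)) :=
    (Pi.basisFun ℝ (Fin Nd)).linearIndependent.comp _ (Fin.castLE_injective hkN)
  exact ⟨Submodule.span ℝ (Set.range _),
    by rw [finrank_span_eq_card hli, Fintype.card_fin]⟩

lemma sub_nonzero {Nd : ℕ} {E : Submodule ℝ (Fin Nd → ℝ)} {k : ℕ} (hk : 1 ≤ k)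
    (hE : Module.finrank ℝ E = k) : ∃ v : Fin Nd → ℝ, v ∈ E ∧ v ≠ 0 := by
  apply Submodule.exists_mem_ne_zero_of_ne_bot
  intro h
  rw [h, finrank_bot] at hE
  omega

lemma minmax_nonneg {Nd : ℕ} (a m : (Fin Nd → ℝ) → ℝ) (k : ℕ) (hkN : k ≤ Nd)
    (h0 : ∀ v : Fin Nd → ℝ, v ≠ 0 → 0 ≤ a v / m v) :
    0 ≤ minmaxEig Nd a m k := by
  obtain ⟨E, hE⟩ := exists_subk k hkN
  unfold minmaxEig
  refine le_csInf ⟨_, ⟨E, hE, rfl⟩⟩ ?_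
  rintro r ⟨F, hF, rfl⟩
  exact Real.sSup_nonneg (by rintro x ⟨v, ⟨hvF, hv0⟩, rfl⟩; exact h0 v hv0)

lemma minmax_le {Nd : ℕ} (a m a' m' : (Fin Nd → ℝ) → ℝ) (k : ℕ) (hk : 1 ≤ k) (hkN : k ≤ Nd)
    {c c₀ : ℝ} (hc : 0 < c)
    (hb : ∀ v : Fin Nd → ℝ, a v / m v ≤ c₀)
    (h0' : ∀ v : Fin Nd → ℝ, v ≠ 0 → 0 ≤ a' v / m' v)
    (h1 : ∀ v : Fin Nd → ℝ, v ≠ 0 → a' v / m' v ≤ c * (a v / m v)) :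
    minmaxEig Nd a' m' k ≤ c * minmaxEig Nd a m k := by
  set S : Set ℝ := {r : ℝ | ∃ E : Submodule ℝ (Fin Nd → ℝ), Module.finrank ℝ E = k ∧
    r = sSup ((fun v => a v / m v) '' {v : Fin Nd → ℝ | v ∈ E ∧ v ≠ 0})} with hS
  set S' : Set ℝ := {r : ℝ | ∃ E : Submodule ℝ (Fin Nd → ℝ), Module.finrank ℝ E = k ∧
    r = sSup ((fun v => a' v / m' v) '' {v : Fin Nd → ℝ | v ∈ E ∧ v ≠ 0})} with hS'
  have hbd' : BddBelow S' := by
    refine ⟨0, ?_⟩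
    rintro r ⟨E, hE, rfl⟩
    exact Real.sSup_nonneg (by rintro x ⟨v, ⟨hvF, hv0⟩, rfl⟩; exact h0' v hv0)
  have key : ∀ r ∈ S, sInf S' ≤ c * r := by
    rintro r ⟨E, hE, rfl⟩
    obtain ⟨v₀, hv₀E, hv₀⟩ := sub_nonzero hk hE
    have hbdd : BddAbove ((fun v => a v / m v) '' {v : Fin Nd → ℝ | v ∈ E ∧ v ≠ 0}) :=
      ⟨c₀, by rintro x ⟨v, hv, rfl⟩; exact hb v⟩
    have hstep : sSup ((fun v => a' v / m' v) '' {v : Fin Nd → ℝ | v ∈ E ∧ v ≠ 0}) ≤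
        c * sSup ((fun v => a v / m v) '' {v : Fin Nd → ℝ | v ∈ E ∧ v ≠ 0}) := by
      refine csSup_le ⟨_, ⟨v₀, ⟨hv₀E, hv₀⟩, rfl⟩⟩ ?_
      rintro x ⟨v, ⟨hvE, hv0⟩, rfl⟩
      exact (h1 v hv0).trans (mul_le_mul_of_nonneg_left
        (le_csSup hbdd ⟨v, ⟨hvE, hv0⟩, rfl⟩) hc.le)
    exact (csInf_le hbd' ⟨E, hE, rfl⟩).trans hstep
  have hSne : S.Nonempty := by
    obtain ⟨E, hE⟩ := exists_subk k hkN
    exact ⟨_, ⟨E, hE, rfl⟩⟩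
  have : sInf S' / c ≤ sInf S := by
    apply le_csInf hSne
    intro r hr
    rw [div_le_iff₀ hc]
    calc sInf S' ≤ c * r := key r hr
      _ = r * c := mul_comm _ _
  calc minmaxEig Nd a' m' k = sInf S' := rfl
    _ ≤ c * sInf S := by rw [← div_le_iff₀' hc]; simpa [div_eq_inv_mul] using this
    _ = c * minmaxEig Nd a m k := rfl

end Stmt17Aux

set_option maxHeartbeats 1000000 in
open Stmt17Aux in
/-- **Eigenvalue perturbation bound for surrogate generalized eigenvalue problems.**
Let `λ_h^{(k)}`, `λ̃_h^{(k)}` be the `k`-th min-max eigenvalues of the generalized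
eigenproblems for symmetric positive-definite matrix pairs `(A, M)` and `(Ã_H, M̃_H)`,
where `|vᵀAv − vᵀÃ_H v| ≤ C₄ H^{q+1} vᵀAv` and `|vᵀMv − vᵀM̃_H v| ≤ C₇ H^{q+1} vᵀMv`
for all `v`.  Then for any `θ > 1` and all sufficiently small `H > 0`,
`|λ_h^{(k)} − λ̃_h^{(k)}| ≤ λ_h^{(k)} · θ (C₄ + C₇) H^{q+1}`. -/
theorem stmt_17 (Nd q : ℕ) (A M : Matrix (Fin Nd) (Fin Nd) ℝ)
    (At Mt : ℝ → Matrix (Fin Nd) (Fin Nd) ℝ)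
    (hA : A.PosDef) (hM : M.PosDef)
    (hAt : ∀ H : ℝ, 0 < H → (At H).PosDef) (hMt : ∀ H : ℝ, 0 < H → (Mt H).PosDef)
    (C4 C7 : ℝ) (hC4 : 0 ≤ C4) (hC7 : 0 ≤ C7)
    (hpa : ∀ H : ℝ, 0 < H → ∀ v : Fin Nd → ℝ,
      |v ⬝ᵥ A.mulVec v - v ⬝ᵥ (At H).mulVec v| ≤
        C4 * H ^ (q + 1) * (v ⬝ᵥ A.mulVec v))
    (hpm : ∀ H : ℝ, 0 < H → ∀ v : Fin Nd → ℝ,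
      |v ⬝ᵥ M.mulVec v - v ⬝ᵥ (Mt H).mulVec v| ≤
        C7 * H ^ (q + 1) * (v ⬝ᵥ M.mulVec v))
    (k : ℕ) (hk : 1 ≤ k) (hkN : k ≤ Nd) :
    ∀ θ : ℝ, 1 < θ → ∃ H0 : ℝ, 0 < H0 ∧ ∀ H : ℝ, 0 < H → H < H0 →
      |minmaxEig Nd (fun v => v ⬝ᵥ A.mulVec v) (fun v => v ⬝ᵥ M.mulVec v) k -
          minmaxEig Nd (fun v => v ⬝ᵥ (At H).mulVec v) (fun v => v ⬝ᵥ (Mt H).mulVec v) k| ≤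
        minmaxEig Nd (fun v => v ⬝ᵥ A.mulVec v) (fun v => v ⬝ᵥ M.mulVec v) k *
          (θ * (C4 + C7) * H ^ (q + 1)) := by
  intro θ hθ
  have hθ0 : 0 < θ := lt_trans one_pos hθ
  set δ : ℝ := min (1 - 1/θ) (1/2) with hδdef
  have hδpos : 0 < δ := lt_min (by rw [sub_pos, div_lt_one hθ0]; exact hθ) (by norm_num)
  have hden : (0:ℝ) < C4 + C7 + 1 := by linarith
  refine ⟨min 1 (δ / (C4 + C7 + 1)), lt_min one_pos (div_pos hδpos hden), ?_⟩
  intro H hH hHlt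
  have hH1 : H < 1 := lt_of_lt_of_le hHlt (min_le_left _ _)
  have hH2 : H < δ / (C4 + C7 + 1) := lt_of_lt_of_le hHlt (min_le_right _ _)
  have hHp : 0 < H ^ (q+1) := pow_pos hH _
  set e4 : ℝ := C4 * H ^ (q+1) with he4def
  set e7 : ℝ := C7 * H ^ (q+1) with he7def
  have he4n : 0 ≤ e4 := mul_nonneg hC4 hHp.le
  have he7n : 0 ≤ e7 := mul_nonneg hC7 hHp.le
  have hHpow : H ^ (q+1) ≤ H := by
    calc H ^ (q+1) ≤ H ^ 1 := pow_le_pow_of_le_one hH.le hH1.le (by omega)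
      _ = H := pow_one H
  have hsum : e4 + e7 < δ := by
    have h2 : (C4 + C7) * H ^ (q+1) ≤ (C4 + C7) * H :=
      mul_le_mul_of_nonneg_left hHpow (by linarith)
    have h3 : (C4 + C7) * H ≤ (C4 + C7 + 1) * H := by nlinarith
    have h4 : H * (C4 + C7 + 1) < δ := (lt_div_iff₀ hden).mp hH2
    have : e4 + e7 = (C4 + C7) * H ^ (q+1) := by rw [he4def, he7def]; ring
    nlinarith
  have hδ1 : δ ≤ 1 - 1/θ := min_le_left _ _
  have hδ2 : δ ≤ 1/2 := min_le_right _ _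
  have h1e7 : 0 < 1 - e7 := by
    have : e7 < δ := by linarith
    have h12 : (1:ℝ)/2 < 1 := by norm_num
    linarith
  have h1e4 : 0 < 1 - e4 := by linarith
  have hθ1 : 1 ≤ θ * (1 - e7) := by
    have h17 : 1/θ < 1 - e7 := by linarith
    have := (div_lt_iff₀ hθ0).mp h17
    linarith
  -- positivity of quadratic forms
  have hQA : ∀ v : Fin Nd → ℝ, v ≠ 0 → 0 < v ⬝ᵥ A *ᵥ v := fun v hv => quad_pos hA hv
  have hQM : ∀ v : Fin Nd → ℝ, v ≠ 0 → 0 < v ⬝ᵥ M *ᵥ v := fun v hv => quad_pos hM hv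
  have hQAt : ∀ v : Fin Nd → ℝ, v ≠ 0 → 0 < v ⬝ᵥ (At H) *ᵥ v :=
    fun v hv => quad_pos (hAt H hH) hv
  have hQMt : ∀ v : Fin Nd → ℝ, v ≠ 0 → 0 < v ⬝ᵥ (Mt H) *ᵥ v :=
    fun v hv => quad_pos (hMt H hH) hv
  -- two-sided perturbation bounds
  have key4 : ∀ v : Fin Nd → ℝ, (1 - e4) * (v ⬝ᵥ A *ᵥ v) ≤ v ⬝ᵥ (At H) *ᵥ v ∧
      v ⬝ᵥ (At H) *ᵥ v ≤ (1 + e4) * (v ⬝ᵥ A *ᵥ v) := by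
    intro v
    have h := abs_le.mp (hpa H hH v)
    rw [← he4def] at h
    constructor <;> nlinarith [h.1, h.2]
  have key7 : ∀ v : Fin Nd → ℝ, (1 - e7) * (v ⬝ᵥ M *ᵥ v) ≤ v ⬝ᵥ (Mt H) *ᵥ v ∧
      v ⬝ᵥ (Mt H) *ᵥ v ≤ (1 + e7) * (v ⬝ᵥ M *ᵥ v) := by
    intro v
    have h := abs_le.mp (hpm H hH v)
    rw [← he7def] at h
    constructor <;> nlinarith [h.1, h.2]
  -- Rayleigh quotient comparisons
  have hc2 : ∀ v : Fin Nd → ℝ, v ≠ 0 →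
      (v ⬝ᵥ (At H) *ᵥ v) / (v ⬝ᵥ (Mt H) *ᵥ v) ≤
        ((1 + e4) / (1 - e7)) * ((v ⬝ᵥ A *ᵥ v) / (v ⬝ᵥ M *ᵥ v)) := by
    intro v hv
    rw [← mul_div_mul_comm, div_le_div_iff₀ (hQMt v hv) (mul_pos h1e7 (hQM v hv))]
    exact mul_le_mul (key4 v).2 (key7 v).1 (mul_pos h1e7 (hQM v hv)).le
      (mul_nonneg (by linarith) (hQA v hv).le)
  have hc1 : ∀ v : Fin Nd → ℝ, v ≠ 0 →
      (v ⬝ᵥ A *ᵥ v) / (v ⬝ᵥ M *ᵥ v) ≤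
        ((1 + e7) / (1 - e4)) * ((v ⬝ᵥ (At H) *ᵥ v) / (v ⬝ᵥ (Mt H) *ᵥ v)) := by
    intro v hv
    rw [← mul_div_mul_comm, div_le_div_iff₀ (hQM v hv) (mul_pos h1e4 (hQMt v hv))]
    have h := mul_le_mul (key4 v).1 (key7 v).2 (hQMt v hv).le (hQAt v hv).le
    calc (v ⬝ᵥ A *ᵥ v) * ((1 - e4) * (v ⬝ᵥ (Mt H) *ᵥ v))
        = ((1 - e4) * (v ⬝ᵥ A *ᵥ v)) * (v ⬝ᵥ (Mt H) *ᵥ v) := by ring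
      _ ≤ (v ⬝ᵥ (At H) *ᵥ v) * ((1 + e7) * (v ⬝ᵥ M *ᵥ v)) := h
      _ = (1 + e7) * (v ⬝ᵥ (At H) *ᵥ v) * (v ⬝ᵥ M *ᵥ v) := by ring
  -- global quotient bounds
  obtain ⟨cAM, hcAMpos, hdomAM⟩ := dom A M hA hM
  obtain ⟨cT, hcTpos, hdomT⟩ := dom (At H) (Mt H) (hAt H hH) (hMt H hH)
  have hbAM : ∀ v : Fin Nd → ℝ, (v ⬝ᵥ A *ᵥ v) / (v ⬝ᵥ M *ᵥ v) ≤ cAM := by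
    intro v
    by_cases hv : v = 0
    · simp [hv]; positivity
    · exact (div_le_iff₀ (hQM v hv)).mpr (hdomAM v)
  have hbT : ∀ v : Fin Nd → ℝ, (v ⬝ᵥ (At H) *ᵥ v) / (v ⬝ᵥ (Mt H) *ᵥ v) ≤ cT := by
    intro v
    by_cases hv : v = 0
    · simp [hv]; positivity
    · exact (div_le_iff₀ (hQMt v hv)).mpr (hdomT v)
  have h0AM : ∀ v : Fin Nd → ℝ, v ≠ 0 → 0 ≤ (v ⬝ᵥ A *ᵥ v) / (v ⬝ᵥ M *ᵥ v) :=
    fun v hv => (div_pos (hQA v hv) (hQM v hv)).le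
  have h0T : ∀ v : Fin Nd → ℝ, v ≠ 0 → 0 ≤ (v ⬝ᵥ (At H) *ᵥ v) / (v ⬝ᵥ (Mt H) *ᵥ v) :=
    fun v hv => (div_pos (hQAt v hv) (hQMt v hv)).le
  have hc2pos : (0:ℝ) < (1 + e4) / (1 - e7) := div_pos (by linarith) h1e7
  have hc1pos : (0:ℝ) < (1 + e7) / (1 - e4) := div_pos (by linarith) h1e4
  set L := minmaxEig Nd (fun v => v ⬝ᵥ A.mulVec v) (fun v => v ⬝ᵥ M.mulVec v) k with hL
  set Lt := minmaxEig Nd (fun v => v ⬝ᵥ (At H).mulVec v) (fun v => v ⬝ᵥ (Mt H).mulVec v) k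
    with hLt
  have hle1 : Lt ≤ (1 + e4) / (1 - e7) * L :=
    minmax_le _ _ _ _ k hk hkN hc2pos hbAM h0T hc2
  have hle2 : L ≤ (1 + e7) / (1 - e4) * Lt :=
    minmax_le _ _ _ _ k hk hkN hc1pos hbT h0AM hc1
  have hL0 : 0 ≤ L := minmax_nonneg _ _ k hkN h0AM
  have hLt0 : 0 ≤ Lt := minmax_nonneg _ _ k hkN h0T
  have h1' : Lt * (1 - e7) ≤ (1 + e4) * L := by
    rw [div_mul_eq_mul_div] at hle1
    exact (le_div_iff₀ h1e7).mp hle1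
  have h2' : L * (1 - e4) ≤ (1 + e7) * Lt := by
    rw [div_mul_eq_mul_div] at hle2
    exact (le_div_iff₀ h1e4).mp hle2
  have hgoal_eq : L * (θ * (C4 + C7) * H ^ (q+1)) = L * (θ * (e4 + e7)) := by
    rw [he4def, he7def]; ring
  rw [hgoal_eq, abs_sub_le_iff]
  constructor
  · -- L - Lt ≤ L * (θ * (e4 + e7))
    have htt : (0:ℝ) ≤ θ * (1 + e7) - 1 := by nlinarith
    have hint : 0 ≤ L * (e4 + e7) * (θ * (1 + e7) - 1) :=
      mul_nonneg (mul_nonneg hL0 (by linarith)) htt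
    nlinarith [h2', hint, he7n, hL0, hLt0]
  · -- Lt - L ≤ L * (θ * (e4 + e7))
    have htt : (0:ℝ) ≤ θ * (1 - e7) - 1 := by linarith
    have hint : 0 ≤ L * (e4 + e7) * (θ * (1 - e7) - 1) :=
      mul_nonneg (mul_nonneg hL0 (by linarith)) htt
    nlinarith [h1', hint, he7n, hL0, hLt0, h1e7]
end

section
/- Exact reproduction of the mass matrix: if the geometry map φ: Ω̂ → Ω is a polynomial of coordinate degree p (φ ∈ [Q_p(Ω̂)]^n), then the Jacobian determinant det(J) lies in Q_{np−1}(Ω̂), and consequently the surrogate mass matrix M̃ built from degree-q spline interpolation of the mass stencil functions satisfies M̃ = M exactly whenever q ≥ n·p − 1. -/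
open scoped BigOperators
open MeasureTheory

noncomputable def bspline (ξ : ℕ → ℝ) : ℕ → ℕ → ℝ → ℝ
  | 0, k, x =>
      if (ξ k ≤ x ∧ x < ξ (k + 1)) ∨ (ξ k < ξ (k + 1) ∧ ξ (k + 1) = 1 ∧ x = 1) then 1 else 0
  | (q + 1), k, x =>
      (if ξ (k + q + 1) = ξ k then 0
        else (x - ξ k) / (ξ (k + q + 1) - ξ k) * bspline ξ q k x)
      + (if ξ (k + q + 2) = ξ (k + 1) then 0
        else (ξ (k + q + 2) - x) / (ξ (k + q + 2) - ξ (k + 1)) * bspline ξ q (k + 1) x)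

noncomputable def openUniformKnot (m p : ℕ) : ℕ → ℝ := fun i =>
  if i ≤ p + 1 then 0 else if m + 1 ≤ i then 1 else ((i : ℝ) - (p + 1)) / ((m : ℝ) - p)

noncomputable def cardCenter (m p k : ℕ) : ℝ :=
  ((k : ℝ) - ((p : ℝ) + 1) / 2) * (1 / ((m : ℝ) - p))

noncomputable def cardinalB (m p : ℕ) (x : ℝ) : ℝ :=
  bspline (openUniformKnot m p) p (p + 1) (x + cardCenter m p (p + 1))

/-- The multivariate cardinal B-spline `B̂(x̂) = b(x̂_1)⋯b(x̂_n)`. -/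
noncomputable def bHat (n m p : ℕ) (y : Fin n → ℝ) : ℝ := ∏ i, cardinalB m p (y i)

/-- The common domain `Ω̃ = [(3p+1)/(2(m−p)), 1 − (3p+1)/(2(m−p))]^n` of all stencil
functions. -/
def tildeOmega (n m p : ℕ) : Set (Fin n → ℝ) :=
  {x | ∀ i, x i ∈ Set.Icc ((3 * (p : ℝ) + 1) / (2 * ((m : ℝ) - p)))
    (1 - (3 * (p : ℝ) + 1) / (2 * ((m : ℝ) - p)))}

open scoped Classical


section AuxLemmas
open scoped Classical

lemma bspline_support {ξ : ℕ → ℝ} (hξ : Monotone ξ) :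
    ∀ (q k : ℕ) (x : ℝ), bspline ξ q k x ≠ 0 → ξ k ≤ x ∧ x ≤ ξ (k + q + 1) := by
  intro q
  induction q with
  | zero =>
    intro k x h
    rw [bspline] at h
    by_cases hc : (ξ k ≤ x ∧ x < ξ (k + 1)) ∨ (ξ k < ξ (k + 1) ∧ ξ (k + 1) = 1 ∧ x = 1)
    · rcases hc with ⟨h1, h2⟩ | ⟨h1, h2, h3⟩
      · exact ⟨h1, h2.le⟩
      · subst h3; exact ⟨h1.le.trans h2.le, h2.ge⟩
    · simp [hc] at h
  | succ q ih =>
    intro k x h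
    rw [bspline] at h
    rcases (by by_contra hc; push_neg at hc; rw [hc.1, hc.2, add_zero] at h; exact h rfl :
        (if ξ (k + q + 1) = ξ k then 0
          else (x - ξ k) / (ξ (k + q + 1) - ξ k) * bspline ξ q k x) ≠ 0 ∨
        (if ξ (k + q + 2) = ξ (k + 1) then 0
          else (ξ (k + q + 2) - x) / (ξ (k + q + 2) - ξ (k + 1)) * bspline ξ q (k + 1) x) ≠ 0)
      with h1 | h2
    · have hb : bspline ξ q k x ≠ 0 := by
        intro hz; rw [hz, mul_zero] at h1; simp at h1
      obtain ⟨ha, hb'⟩ := ih k x hb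
      refine ⟨ha, hb'.trans (hξ (by omega))⟩
    · have hb : bspline ξ q (k + 1) x ≠ 0 := by
        intro hz; rw [hz, mul_zero] at h2; simp at h2
      obtain ⟨ha, hb'⟩ := ih (k + 1) x hb
      refine ⟨(hξ (by omega)).trans ha, hb'.trans (hξ (by omega))⟩

lemma abs_bspline_le {ξ : ℕ → ℝ} (hξ : Monotone ξ) :
    ∀ (q k : ℕ) (x : ℝ), |bspline ξ q k x| ≤ 2 ^ q := by
  intro q
  induction q with
  | zero =>
    intro k x
    rw [bspline]
    split <;> simp
  | succ q ih =>
    intro k x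
    rw [bspline]
    refine (abs_add_le _ _).trans ?_
    have h1 : |if ξ (k + q + 1) = ξ k then 0
        else (x - ξ k) / (ξ (k + q + 1) - ξ k) * bspline ξ q k x| ≤ 2 ^ q := by
      split
      · rw [abs_zero]; positivity
      · rename_i hne
        by_cases hb : bspline ξ q k x = 0
        · rw [hb, mul_zero, abs_zero]; positivity
        · obtain ⟨ha, hb'⟩ := bspline_support hξ q k x hb
          have hd : 0 < ξ (k + q + 1) - ξ k :=
            sub_pos.2 (lt_of_le_of_ne (hξ (by omega)) (Ne.symm hne))
          rw [abs_mul]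
          have hr : |(x - ξ k) / (ξ (k + q + 1) - ξ k)| ≤ 1 := by
            rw [abs_div, abs_of_nonneg (sub_nonneg.2 ha), abs_of_pos hd]
            rw [div_le_one hd]; linarith
          calc |(x - ξ k) / (ξ (k + q + 1) - ξ k)| * |bspline ξ q k x|
              ≤ 1 * 2 ^ q := mul_le_mul hr (ih k x) (abs_nonneg _) zero_le_one
            _ = 2 ^ q := one_mul _
    have h2 : |if ξ (k + q + 2) = ξ (k + 1) then 0
        else (ξ (k + q + 2) - x) / (ξ (k + q + 2) - ξ (k + 1)) * bspline ξ q (k + 1) x| ≤ 2 ^ q := by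
      split
      · rw [abs_zero]; positivity
      · rename_i hne
        by_cases hb : bspline ξ q (k + 1) x = 0
        · rw [hb, mul_zero, abs_zero]; positivity
        · obtain ⟨ha, hb'⟩ := bspline_support hξ q (k + 1) x hb
          have hb'' : x ≤ ξ (k + q + 2) :=
            hb'.trans (hξ (show k + 1 + q + 1 ≤ k + q + 2 by omega))
          have hd : 0 < ξ (k + q + 2) - ξ (k + 1) :=
            sub_pos.2 (lt_of_le_of_ne (hξ (by omega)) (Ne.symm hne))
          rw [abs_mul]
          have hr : |(ξ (k + q + 2) - x) / (ξ (k + q + 2) - ξ (k + 1))| ≤ 1 := by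
            rw [abs_div, abs_of_nonneg (sub_nonneg.2 hb''), abs_of_pos hd]
            rw [div_le_one hd]; linarith
          calc |(ξ (k + q + 2) - x) / (ξ (k + q + 2) - ξ (k + 1))| * |bspline ξ q (k + 1) x|
              ≤ 1 * 2 ^ q := mul_le_mul hr (ih (k + 1) x) (abs_nonneg _) zero_le_one
            _ = 2 ^ q := one_mul _
    calc _ ≤ (2:ℝ) ^ q + 2 ^ q := add_le_add h1 h2
      _ = 2 ^ (q + 1) := by ring

lemma measurable_bspline (ξ : ℕ → ℝ) : ∀ (q k : ℕ), Measurable (bspline ξ q k) := by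
  intro q
  induction q with
  | zero =>
    intro k
    have : bspline ξ 0 k = fun x =>
        if x ∈ (Set.Ico (ξ k) (ξ (k + 1)) ∪
          {x : ℝ | (ξ k < ξ (k + 1) ∧ ξ (k + 1) = 1) ∧ x = 1}) then (1:ℝ) else 0 := by
      funext x
      rw [bspline]
      congr 1
      simp [Set.mem_Ico, Set.mem_setOf_eq, and_assoc]
    rw [this]
    have hs : MeasurableSet (Set.Ico (ξ k) (ξ (k + 1)) ∪
        {x : ℝ | (ξ k < ξ (k + 1) ∧ ξ (k + 1) = 1) ∧ x = 1}) := by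
      apply measurableSet_Ico.union
      by_cases hc : ξ k < ξ (k + 1) ∧ ξ (k + 1) = 1
      · have : {x : ℝ | (ξ k < ξ (k + 1) ∧ ξ (k + 1) = 1) ∧ x = 1} = {1} := by
          ext x
          simp only [Set.mem_setOf_eq, Set.mem_singleton_iff]
          exact ⟨fun h => h.2, fun h => ⟨hc, h⟩⟩
        rw [this]; exact measurableSet_singleton 1
      · have : {x : ℝ | (ξ k < ξ (k + 1) ∧ ξ (k + 1) = 1) ∧ x = 1} = ∅ := by
          ext x; simp [hc]
        rw [this]; exact MeasurableSet.empty
    exact Measurable.ite hs measurable_const measurable_const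
  | succ q ih =>
    intro k
    have : bspline ξ (q + 1) k = fun x =>
      (if ξ (k + q + 1) = ξ k then 0
        else (x - ξ k) / (ξ (k + q + 1) - ξ k) * bspline ξ q k x)
      + (if ξ (k + q + 2) = ξ (k + 1) then 0
        else (ξ (k + q + 2) - x) / (ξ (k + q + 2) - ξ (k + 1)) * bspline ξ q (k + 1) x) := by
      funext x; rw [bspline]
    rw [this]
    apply Measurable.add
    · split
      · exact measurable_const
      · exact ((measurable_id.sub_const _).div_const _).mul (ih k)
    · split
      · exact measurable_const
      · exact ((measurable_const.sub measurable_id).div_const _).mul (ih (k + 1))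

section knots
variable {m p : ℕ}

lemma knot_mem (hmp : p < m) (i : ℕ) : openUniformKnot m p i ∈ Set.Icc (0:ℝ) 1 := by
  have hd : (0:ℝ) < (m:ℝ) - p := by
    have : (p:ℝ) < m := by exact_mod_cast hmp
    linarith
  unfold openUniformKnot
  split
  · simp
  · split
    · simp
    · rename_i h1 h2
      push_neg at h1 h2
      constructor
      · apply div_nonneg _ hd.le
        have : (p:ℝ) + 1 < i := by exact_mod_cast h1
        linarith
      · rw [div_le_one hd]
        have : (i:ℝ) < m + 1 := by exact_mod_cast h2
        push_cast
        linarith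

lemma knot_mono (hmp : p < m) : Monotone (openUniformKnot m p) := by
  have hd : (0:ℝ) < (m:ℝ) - p := by
    have : (p:ℝ) < m := by exact_mod_cast hmp
    linarith
  apply monotone_nat_of_le_succ
  intro i
  rcases le_or_gt (i+1) (p+1) with h1 | h1
  · unfold openUniformKnot
    rw [if_pos (by omega), if_pos h1]
  · rcases le_or_gt (m+1) (i+1) with h2 | h2
    · have : openUniformKnot m p (i+1) = 1 := by
        unfold openUniformKnot
        rw [if_neg (by omega), if_pos h2]
      rw [this]
      exact (knot_mem hmp i).2
    · have hi1 : openUniformKnot m p (i+1) = ((i:ℝ) + 1 - (p + 1)) / ((m:ℝ) - p) := by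
        unfold openUniformKnot
        rw [if_neg (by omega), if_neg (by omega)]
        push_cast
        ring_nf
      rw [hi1]
      rcases le_or_gt i (p+1) with h3 | h3
      · have : openUniformKnot m p i = 0 := by unfold openUniformKnot; rw [if_pos h3]
        rw [this]
        apply div_nonneg _ hd.le
        have : (p:ℝ) + 1 ≤ i + 1 := by exact_mod_cast (by omega : p + 1 ≤ i + 1)
        linarith
      · have : openUniformKnot m p i = ((i:ℝ) - (p + 1)) / ((m:ℝ) - p) := by
          unfold openUniformKnot
          rw [if_neg (by omega), if_neg (by omega)]
        rw [this]
        gcongr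
        linarith

lemma cardinalB_support (hmp : p < m) {x : ℝ} (h : cardinalB m p x ≠ 0) :
    -cardCenter m p (p + 1) ≤ x ∧ x ≤ 1 - cardCenter m p (p + 1) := by
  obtain ⟨h1, h2⟩ := bspline_support (knot_mono hmp) p (p+1) _ h
  have k1 := (knot_mem hmp (p+1)).1
  have k2 := (knot_mem hmp (p+1+p+1)).2
  constructor <;> linarith

lemma abs_cardinalB_le (hmp : p < m) (x : ℝ) : |cardinalB m p x| ≤ 2 ^ p :=
  abs_bspline_le (knot_mono hmp) p (p+1) _

lemma measurable_cardinalB : Measurable (cardinalB m p) :=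
  (measurable_bspline _ p (p+1)).comp (measurable_id.add_const _)

end knots

section bhat
variable {n m p : ℕ}

lemma measurable_bHat : Measurable (bHat n m p) :=
  Finset.measurable_prod _ fun i _ =>
    (measurable_cardinalB).comp (measurable_pi_apply i)

lemma abs_bHat_le (hmp : p < m) (y : Fin n → ℝ) : |bHat n m p y| ≤ (2 ^ p) ^ n := by
  unfold bHat
  rw [Finset.abs_prod]
  calc ∏ i, |cardinalB m p (y i)| ≤ ∏ _i : Fin n, (2:ℝ) ^ p :=
        Finset.prod_le_prod (fun i _ => abs_nonneg _) (fun i _ => abs_cardinalB_le hmp _)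
    _ = (2 ^ p) ^ n := by simp [Finset.prod_const]

lemma bHat_support (hmp : p < m) {y : Fin n → ℝ} (h : bHat n m p y ≠ 0) :
    y ∈ Set.Icc (fun _ : Fin n => -cardCenter m p (p + 1))
      (fun _ : Fin n => 1 - cardCenter m p (p + 1)) := by
  rw [Set.mem_Icc]
  have := Finset.prod_ne_zero_iff.1 h
  constructor <;> intro i
  · exact (cardinalB_support hmp (this i (Finset.mem_univ i))).1
  · exact (cardinalB_support hmp (this i (Finset.mem_univ i))).2

end bhat

open MvPolynomial

lemma eval_add_eq {n : ℕ} (x y : Fin n → ℝ) (P : MvPolynomial (Fin n) ℝ) :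
    eval (x + y) P = eval y (aeval (fun j => X j + C (x j)) P) := by
  induction P using MvPolynomial.induction_on with
  | C a => simp
  | add p q hp hq => simp [hp, hq]
  | mul_X p i hp =>
    rw [eval_mul, eval_X, hp, map_mul, aeval_X, eval_mul, eval_add, eval_X, eval_C, Pi.add_apply]
    ring

variable {n : ℕ} {s : Set (Fin n → ℝ)} {w : (Fin n → ℝ) → ℝ}

lemma hw_shift
    (hw : ∀ Q : MvPolynomial (Fin n) ℝ, IntegrableOn (fun y => w y * eval y Q) s volume)
    (P : MvPolynomial (Fin n) ℝ) (x : Fin n → ℝ) :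
    IntegrableOn (fun y => w y * eval (x + y) P) s volume := by
  have : (fun y => w y * eval (x + y) P)
      = fun y => w y * eval y (aeval (fun j => X j + C (x j)) P) := by
    funext y; rw [eval_add_eq]
  rw [this]
  exact hw _

lemma hw_mul
    (hw : ∀ Q : MvPolynomial (Fin n) ℝ, IntegrableOn (fun y => w y * eval y Q) s volume)
    (i : Fin n) :
    ∀ Q : MvPolynomial (Fin n) ℝ,
      IntegrableOn (fun y => (w y * y i) * eval y Q) s volume := by
  intro Q
  have : (fun y : Fin n → ℝ => (w y * y i) * eval y Q)
      = fun y => w y * eval y (X i * Q) := by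
    funext y; rw [eval_mul, eval_X]; ring
  rw [this]
  exact hw _

lemma integral_const_poly (a : ℝ)
    (w : (Fin n → ℝ) → ℝ) :
    ∃ S : MvPolynomial (Fin n) ℝ, (∀ j, degreeOf j S ≤ 0) ∧
      ∀ x, (∫ y in s, w y * eval (x + y) ((monomial 0 a : MvPolynomial (Fin n) ℝ))) = eval x S := by
  refine ⟨C (∫ y in s, w y * a), fun j => by rw [degreeOf_C], fun x => ?_⟩
  rw [eval_C]
  congr 1
  funext y
  rw [monomial_zero', eval_C]

lemma integral_monomial :
    ∀ (N : ℕ) (u : Fin n →₀ ℕ), (∑ j, u j) ≤ N → ∀ (a : ℝ) (w : (Fin n → ℝ) → ℝ),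
    (∀ Q : MvPolynomial (Fin n) ℝ, IntegrableOn (fun y => w y * eval y Q) s volume) →
    ∃ S : MvPolynomial (Fin n) ℝ, (∀ j, degreeOf j S ≤ u j) ∧
      ∀ x, (∫ y in s, w y * eval (x + y) (monomial u a)) = eval x S := by
  intro N
  induction N with
  | zero =>
    intro u hu a w hw
    have hu0 : u = 0 := by
      ext j
      have := Finset.sum_eq_zero_iff.1 (Nat.le_zero.1 hu) j (Finset.mem_univ j)
      simpa using this
    subst hu0
    obtain ⟨S, h1, h2⟩ := integral_const_poly (s := s) a w
    exact ⟨S, fun j => (h1 j).trans (Nat.zero_le _), h2⟩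
  | succ N ih =>
    intro u hu a w hw
    by_cases h0 : u = 0
    · subst h0
      obtain ⟨S, h1, h2⟩ := integral_const_poly (s := s) a w
      exact ⟨S, fun j => (h1 j).trans (Nat.zero_le _), h2⟩
    · have : ∃ i, u i ≠ 0 := by
        by_contra hc
        push_neg at hc
        exact h0 (Finsupp.ext hc)
      obtain ⟨i, hi⟩ := this
      set u' := u - Finsupp.single i 1 with hu'def
      have hle : Finsupp.single i 1 ≤ u := by
        intro j
        rcases eq_or_ne j i with rfl | hj
        · simpa using Nat.one_le_iff_ne_zero.2 hi
        · simp [Finsupp.single_apply, Ne.symm hj]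
      have hu'add : u' + Finsupp.single i 1 = u := by
        rw [hu'def]
        exact tsub_add_cancel_of_le hle
      have happ : ∀ j, u' j = u j - (if i = j then 1 else 0) := by
        intro j
        rw [hu'def]
        simp [Finsupp.single_apply]
      have hsum : (∑ j, u' j) ≤ N := by
        have hs1 : (∑ j, u j) = (∑ j, u' j) + 1 := by
          have h' : ∀ j, u j = u' j + (if i = j then 1 else 0) := by
            intro j
            rw [← hu'add]
            simp [Finsupp.single_apply]
          simp_rw [h']
          rw [Finset.sum_add_distrib, Finset.sum_ite_eq]
          simp
        omega
      obtain ⟨S₁, hd₁, hi₁⟩ := ih u' hsum a w hw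
      obtain ⟨S₂, hd₂, hi₂⟩ := ih u' hsum a (fun y => w y * y i) (hw_mul hw i)
      refine ⟨X i * S₁ + S₂, ?_, ?_⟩
      · intro j
        refine (degreeOf_add_le _ _ _).trans (max_le ?_ ?_)
        · refine (degreeOf_mul_le _ _ _).trans ?_
          rw [degreeOf_X]
          have h1 := hd₁ j
          have h2 := happ j
          by_cases hij : j = i
          · rw [if_pos hij]
            rw [if_pos hij.symm] at h2
            have h3 : u j ≠ 0 := by rw [hij]; exact hi
            omega
          · rw [if_neg hij]
            rw [if_neg (Ne.symm hij)] at h2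
            omega
        · exact (hd₂ j).trans (by have := happ j; omega)
      · intro x
        have key : ∀ y : Fin n → ℝ, w y * eval (x + y) (monomial u a)
            = x i * (w y * eval (x + y) (monomial u' a))
              + (w y * y i) * eval (x + y) (monomial u' a) := by
          intro y
          have hm : (monomial u a : MvPolynomial (Fin n) ℝ)
              = monomial u' a * X i := by
            rw [X, monomial_mul, mul_one, hu'add]
          rw [hm, eval_mul, eval_X, Pi.add_apply]
          ring
        calc (∫ y in s, w y * eval (x + y) (monomial u a))
            = ∫ y in s, (x i * (w y * eval (x + y) (monomial u' a))
              + (w y * y i) * eval (x + y) (monomial u' a)) := by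
              congr 1; funext y; rw [key]
          _ = x i * (∫ y in s, w y * eval (x + y) (monomial u' a))
              + ∫ y in s, (w y * y i) * eval (x + y) (monomial u' a) := by
              rw [integral_add ((hw_shift hw _ x).const_mul _) (hw_shift (hw_mul hw i) _ x),
                integral_const_mul]
          _ = eval x (X i * S₁ + S₂) := by
              rw [hi₁ x, hi₂ x, eval_add, eval_mul, eval_X]

lemma integral_finsetsum (D : Fin n → ℕ)
    (hw : ∀ Q : MvPolynomial (Fin n) ℝ, IntegrableOn (fun y => w y * eval y Q) s volume) :
    ∀ (F : Finset (Fin n →₀ ℕ)) (c : (Fin n →₀ ℕ) → ℝ), (∀ u ∈ F, ∀ j, u j ≤ D j) →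
    ∃ S : MvPolynomial (Fin n) ℝ, (∀ j, degreeOf j S ≤ D j) ∧
      ∀ x, (∫ y in s, w y * eval (x + y) (∑ u ∈ F, monomial u (c u))) = eval x S := by
  intro F
  induction F using Finset.induction_on with
  | empty =>
    intro c _
    refine ⟨0, by simp, fun x => ?_⟩
    simp
  | insert u F hnotmem ihF =>
    intro c hF
    obtain ⟨S₂, hd₂, hi₂⟩ := ihF c (fun v hv j => hF v (Finset.mem_insert_of_mem hv) j)
    obtain ⟨S₁, hd₁, hi₁⟩ := integral_monomial (s := s) (∑ j, u j) u le_rfl (c u) w hw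
    refine ⟨S₁ + S₂, ?_, ?_⟩
    · intro j
      refine (degreeOf_add_le _ _ _).trans (max_le ?_ (hd₂ j))
      exact (hd₁ j).trans (hF u (Finset.mem_insert_self u F) j)
    · intro x
      rw [Finset.sum_insert hnotmem]
      calc (∫ y in s, w y * eval (x + y) (monomial u (c u) + ∑ v ∈ F, monomial v (c v)))
          = ∫ y in s, (w y * eval (x + y) (monomial u (c u))
            + w y * eval (x + y) (∑ v ∈ F, monomial v (c v))) := by
            congr 1; funext y; rw [eval_add]; ring
        _ = (∫ y in s, w y * eval (x + y) (monomial u (c u)))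
            + ∫ y in s, w y * eval (x + y) (∑ v ∈ F, monomial v (c v)) :=
            integral_add (hw_shift hw _ x) (hw_shift hw _ x)
        _ = eval x (S₁ + S₂) := by rw [hi₁ x, hi₂ x, eval_add]

lemma integral_poly (D : Fin n → ℕ)
    (hw : ∀ Q : MvPolynomial (Fin n) ℝ, IntegrableOn (fun y => w y * eval y Q) s volume)
    (P : MvPolynomial (Fin n) ℝ) (hD : ∀ j, degreeOf j P ≤ D j) :
    ∃ S : MvPolynomial (Fin n) ℝ, (∀ j, degreeOf j S ≤ D j) ∧
      ∀ x, (∫ y in s, w y * eval (x + y) P) = eval x S := by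
  obtain ⟨S, h1, h2⟩ := integral_finsetsum (s := s) (w := w) D hw P.support (fun u => coeff u P)
    (fun u hu j => (monomial_le_degreeOf j hu).trans (hD j))
  refine ⟨S, h1, fun x => ?_⟩
  rw [← h2 x]
  congr 1
  funext y
  rw [← as_sum P]

lemma degreeOf_pderiv_le (i j : Fin n) (f : MvPolynomial (Fin n) ℝ) :
    degreeOf j (pderiv i f) ≤ degreeOf j f - (if i = j then 1 else 0) := by
  rw [degreeOf_le_iff]
  intro m hm
  have : pderiv i f = ∑ s ∈ f.support, monomial (s - Finsupp.single i 1) (coeff s f * s i) := by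
    conv_lhs => rw [as_sum f]
    rw [map_sum]
    congr 1
    funext s
    rw [pderiv_monomial]
  rw [this] at hm
  obtain ⟨v, hv, hm'⟩ := Finset.mem_biUnion.1 (support_sum hm)
  have hmem := support_monomial_subset hm'
  rw [Finset.mem_singleton] at hmem
  subst hmem
  have hvj : v j ≤ degreeOf j f := monomial_le_degreeOf j hv
  have hsub : (v - Finsupp.single i 1 : Fin n →₀ ℕ) j = v j - (if i = j then 1 else 0) := by
    rw [Finsupp.tsub_apply, Finsupp.single_apply]
  rw [hsub]
  omega

lemma det_degreeOf {n p : ℕ} (hp : 0 < p) (hn : 1 ≤ n)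
    (φp : Fin n → MvPolynomial (Fin n) ℝ)
    (hφ : ∀ i j, (φp i).degreeOf j ≤ p)
    (J : Matrix (Fin n) (Fin n) (MvPolynomial (Fin n) ℝ))
    (hJ : ∀ i j, J i j = MvPolynomial.pderiv j (φp i)) :
    ∀ j, J.det.degreeOf j ≤ n * p - 1 := by
  intro j
  rw [Matrix.det_apply]
  refine (degreeOf_sum_le _ _ _).trans (Finset.sup_le fun σ _ => ?_)
  have hsmul : degreeOf j (Equiv.Perm.sign σ • ∏ i, J (σ i) i)
      = degreeOf j (∏ i, J (σ i) i) := by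
    rcases Int.units_eq_one_or (Equiv.Perm.sign σ) with h | h
    · rw [h, one_smul]
    · rw [h]
      have : (-1 : ℤˣ) • (∏ i, J (σ i) i) = -(∏ i, J (σ i) i) := by
        simp [Units.smul_def]
      rw [this, degreeOf_neg]
  rw [hsmul]
  refine (degreeOf_prod_le _ _ _).trans ?_
  have hbound : ∀ i : Fin n, degreeOf j (J (σ i) i) ≤ p - (if i = j then 1 else 0) := by
    intro i
    rw [hJ (σ i) i]
    refine (degreeOf_pderiv_le i j (φp (σ i))).trans ?_
    have h5 := hφ (σ i) j
    have h6 : (if i = j then 1 else 0 : ℕ) ≤ 1 := by split <;> omega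
    omega
  calc ∑ i, degreeOf j (J (σ i) i) ≤ ∑ i : Fin n, (p - if i = j then 1 else 0) :=
        Finset.sum_le_sum fun i _ => hbound i
    _ = (p - 1) + ∑ i ∈ Finset.univ.erase j, (p - if i = j then 1 else 0) := by
        rw [← Finset.add_sum_erase _ _ (Finset.mem_univ j), if_pos rfl]
    _ = (p - 1) + (n - 1) * p := by
        congr 1
        rw [Finset.sum_congr rfl (fun i hi => by
          rw [if_neg (Finset.ne_of_mem_erase hi)]), Finset.sum_const, smul_eq_mul]
        congr 1
        rw [Finset.card_erase_of_mem (Finset.mem_univ j), Finset.card_univ, Fintype.card_fin]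
    _ ≤ n * p - 1 := by
        have h1 : (n - 1) * p + p = n * p := by
          rw [← Nat.succ_pred_eq_of_pos hn, Nat.succ_mul]
          congr 2 <;> omega
        omega

lemma ne_zero_measurable {α : Type*} [MeasurableSpace α] {f : α → ℝ} (hf : Measurable f) :
    MeasurableSet {y | f y ≠ 0} := by
  have : {y | f y ≠ 0} = f ⁻¹' ({0}ᶜ) := rfl
  rw [this]
  exact hf (measurableSet_singleton (0:ℝ)).compl

lemma integrable_weight {n m p : ℕ} (hmp : p < m) (v : Fin n → ℝ)
    (Q : MvPolynomial (Fin n) ℝ) :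
    IntegrableOn
      (fun y => (bHat n m p (y - v) * bHat n m p y) * eval y Q)
      ({y | bHat n m p y ≠ 0} ∩ {y | bHat n m p (y - v) ≠ 0}) volume := by
  set c := cardCenter m p (p + 1) with hc
  set K : Set (Fin n → ℝ) := Set.Icc (fun _ => -c) (fun _ => 1 - c) with hK
  set T : Set (Fin n → ℝ) :=
    {y | bHat n m p y ≠ 0} ∩ {y | bHat n m p (y - v) ≠ 0} with hT
  have hmble_sub : Measurable fun y : Fin n → ℝ => y - v :=
    measurable_id.sub measurable_const
  have hTmeas : MeasurableSet T :=
    (ne_zero_measurable measurable_bHat).inter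
      (ne_zero_measurable (measurable_bHat.comp hmble_sub))
  have hTK : T ⊆ K := fun y hy => bHat_support hmp hy.1
  have hμT : volume T ≠ ⊤ :=
    ((measure_mono hTK).trans_lt isCompact_Icc.measure_lt_top).ne
  have hf_mble : Measurable fun y : Fin n → ℝ =>
      (bHat n m p (y - v) * bHat n m p y) * eval y Q :=
    ((measurable_bHat.comp hmble_sub).mul measurable_bHat).mul
      (MvPolynomial.continuous_eval (p := Q)).measurable
  obtain ⟨C, hC⟩ := isCompact_Icc.exists_bound_of_continuousOn
    (MvPolynomial.continuous_eval (p := Q)).continuousOn (s := K)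
  refine Measure.integrableOn_of_bounded hμT hf_mble.aestronglyMeasurable
    (M := (2 ^ p) ^ n * (2 ^ p) ^ n * C) ?_
  rw [ae_restrict_iff' hTmeas]
  refine Filter.Eventually.of_forall fun y hy => ?_
  have hyK : y ∈ K := hTK hy
  have h1 : |bHat n m p (y - v)| ≤ (2 ^ p) ^ n := abs_bHat_le hmp _
  have h2 : |bHat n m p y| ≤ (2 ^ p) ^ n := abs_bHat_le hmp _
  have h3 : |eval y Q| ≤ C := by
    have := hC y hyK
    rwa [Real.norm_eq_abs] at this
  rw [Real.norm_eq_abs, abs_mul, abs_mul]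
  have hC0 : 0 ≤ C := (abs_nonneg _).trans h3
  have hb0 : (0:ℝ) ≤ (2 ^ p) ^ n := by positivity
  calc |bHat n m p (y - v)| * |bHat n m p y| * |eval y Q|
      ≤ ((2 ^ p) ^ n * (2 ^ p) ^ n) * C := by
        apply mul_le_mul _ h3 (abs_nonneg _) (by positivity)
        exact mul_le_mul h1 h2 (abs_nonneg _) hb0
    _ = (2 ^ p) ^ n * (2 ^ p) ^ n * C := by ring

end AuxLemmas

/-- **Exact reproduction of the mass matrix.**  If the geometry map `φ : Ω̂ → Ω` is a
polynomial of coordinate degree `p` (`φ ∈ [Q_p(Ω̂)]^n`), then the Jacobian determinant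
`det(J)` lies in `Q_{np−1}(Ω̂)`; consequently the surrogate mass matrix `M̃` built from
degree-`q` spline interpolation of the mass stencil functions
`Φ_δ(x̃) = ∫_{ω̂_δ} B̂_δ(ŷ) B̂(ŷ) det(J)(x̃+ŷ) dŷ` coincides with the true mass matrix `M`
whenever `q ≥ n·p − 1`. -/
theorem stmt_18 (n p q m : ℕ) (hp : 0 < p) (hn : 1 ≤ n) (hm : 2 * p + 1 ≤ m)
    (hq : n * p - 1 ≤ q)
    (φp : Fin n → MvPolynomial (Fin n) ℝ)
    (hφ : ∀ i j, (φp i).degreeOf j ≤ p)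
    (J : Matrix (Fin n) (Fin n) (MvPolynomial (Fin n) ℝ))
    (hJ : ∀ i j, J i j = MvPolynomial.pderiv j (φp i))
    (Φ : (Fin n → ℤ) → (Fin n → ℝ) → ℝ)
    (hΦ : ∀ d : Fin n → ℤ, Φ d = fun xt => ∫ y in
        ({y | bHat n m p y ≠ 0} ∩
          {y | bHat n m p (y - fun i => (d i : ℝ) * (1 / ((m : ℝ) - p))) ≠ 0}),
        bHat n m p (y - fun i => (d i : ℝ) * (1 / ((m : ℝ) - p))) * bHat n m p y *
          MvPolynomial.eval (xt + y) J.det) :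
    -- (1) the Jacobian determinant lies in `Q_{np−1}(Ω̂)`
    (∀ i, J.det.degreeOf i ≤ n * p - 1) ∧
    -- (2) the surrogate mass matrix coincides with the true mass matrix
    (∀ Pr : ((Fin n → ℝ) → ℝ) → ((Fin n → ℝ) → ℝ),
      (∀ S : MvPolynomial (Fin n) ℝ, (∀ i, S.degreeOf i ≤ q) →
        ∀ x ∈ tildeOmega n m p, Pr (fun z => MvPolynomial.eval z S) x =
          MvPolynomial.eval x S) →
      ∀ M : ((Fin n → ℕ) → (Fin n → ℕ) → ℝ),
        (∀ i j : Fin n → ℕ,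
          ((∀ t, i t ∈ Finset.Icc (p + 1) (m - p)) ∧ (∀ t, j t ∈ Finset.Icc (p + 1) (m - p)) ∧
            (fun t => cardCenter m p (i t)) ∈ tildeOmega n m p ∧
            (fun t => cardCenter m p (j t)) ∈ tildeOmega n m p) →
          M i j = Φ (fun t => (j t : ℤ) - (i t : ℤ)) (fun t => cardCenter m p (i t))) →
        (fun i j : Fin n → ℕ =>
          if ((∀ t, i t ∈ Finset.Icc (p + 1) (m - p)) ∧ (∀ t, j t ∈ Finset.Icc (p + 1) (m - p)) ∧
              (fun t => cardCenter m p (i t)) ∈ tildeOmega n m p ∧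
              (fun t => cardCenter m p (j t)) ∈ tildeOmega n m p)
          then Pr (Φ (fun t => (j t : ℤ) - (i t : ℤ))) (fun t => cardCenter m p (i t))
          else M i j) = M) := by
  have hmp : p < m := by omega
  have hdet := det_degreeOf hp hn φp hφ J hJ
  refine ⟨hdet, ?_⟩
  intro Pr hPr M hM
  funext i j
  by_cases h : ((∀ t, i t ∈ Finset.Icc (p + 1) (m - p)) ∧
      (∀ t, j t ∈ Finset.Icc (p + 1) (m - p)) ∧
      (fun t => cardCenter m p (i t)) ∈ tildeOmega n m p ∧
      (fun t => cardCenter m p (j t)) ∈ tildeOmega n m p)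
  · rw [if_pos h]
    have hD : ∀ t, MvPolynomial.degreeOf t J.det ≤ q := fun t => (hdet t).trans hq
    obtain ⟨S, hdS, hS⟩ := integral_poly
      (s := {y | bHat n m p y ≠ 0} ∩
        {y | bHat n m p (y - fun t =>
          ((((j t : ℤ) - (i t : ℤ)) : ℤ) : ℝ) * (1 / ((m : ℝ) - p))) ≠ 0})
      (w := fun y => bHat n m p (y - fun t =>
          ((((j t : ℤ) - (i t : ℤ)) : ℤ) : ℝ) * (1 / ((m : ℝ) - p))) * bHat n m p y)
      (fun _ => q) (integrable_weight hmp _) J.det hD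
    have hΦeq : Φ (fun t => (j t : ℤ) - (i t : ℤ)) = fun z => MvPolynomial.eval z S := by
      rw [hΦ (fun t => (j t : ℤ) - (i t : ℤ))]
      funext z
      exact hS z
    rw [hM i j h, hΦeq]
    exact hPr S (fun t => hdS t) _ h.2.2.1
  · rw [if_neg h]
end

section
/- Exact reproduction of the divergence matrix for Stokes flow: if the geometry map φ: Ω̂ → Ω (n = 2 or 3) is a polynomial of coordinate degree p, then the trace of the adjugate of its Jacobian, tr(adj(J)), is a polynomial in Q_{(n−1)p}(Ω̂); consequently, the surrogate divergence matrix B̃ built from degree-q spline interpolation of the divergence stencil functions coincides with the true divergence matrix B whenever q ≥ (n−1)p. -/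
open scoped BigOperators
open MeasureTheory

open scoped Classical

open MvPolynomial

/- ### Auxiliary lemmas on `degreeOf` -/

lemma aux_degreeOf_monomial_le {σ R : Type*} [CommSemiring R] (s : σ →₀ ℕ) (a : R) (i : σ) :
    degreeOf i (monomial s a) ≤ s i := by
  classical
  by_cases h : a = 0
  · simp [h]
  · rw [degreeOf_monomial_eq s i h]

lemma aux_degreeOf_pderiv_le {σ R : Type*} [CommRing R] (f : MvPolynomial σ R) (j i : σ) :
    degreeOf i (pderiv j f) ≤ degreeOf i f := by
  classical
  conv_lhs => rw [f.as_sum]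
  rw [map_sum]
  refine (degreeOf_sum_le _ _ _).trans (Finset.sup_le fun s hs => ?_)
  rw [pderiv_monomial]
  refine (aux_degreeOf_monomial_le _ _ _).trans ?_
  refine le_trans ?_ (monomial_le_degreeOf i hs)
  simp only [Finsupp.tsub_apply]
  exact Nat.sub_le _ _

lemma aux_adjugate_degreeOf {n : ℕ} (p : ℕ) (J : Matrix (Fin n) (Fin n) (MvPolynomial (Fin n) ℝ))
    (hJd : ∀ a b c, degreeOf c (J a b) ≤ p) (k l i : Fin n) :
    degreeOf i (J.adjugate k l) ≤ (n - 1) * p := by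
  classical
  rw [Matrix.adjugate_apply, Matrix.det_apply]
  refine (degreeOf_sum_le _ _ _).trans (Finset.sup_le fun σ _ => ?_)
  rw [Units.smul_def, zsmul_eq_mul]
  refine (degreeOf_mul_le _ _ _).trans ?_
  have h0 : degreeOf i ((↑(↑(Equiv.Perm.sign σ) : ℤ) : MvPolynomial (Fin n) ℝ)) = 0 := by
    rw [← map_intCast (C : ℝ →+* MvPolynomial (Fin n) ℝ)]
    exact degreeOf_C _ _
  rw [h0, zero_add]
  refine (degreeOf_prod_le _ _ _).trans ?_
  have hb : ∀ c : Fin n, degreeOf i ((J.updateRow l (Pi.single k 1)) (σ c) c)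
      ≤ if c = σ.symm l then 0 else p := by
    intro c
    rw [Matrix.updateRow_apply]
    by_cases hc : σ c = l
    · rw [if_pos hc, if_pos ((Equiv.eq_symm_apply σ).mpr hc)]
      rcases eq_or_ne c k with h | h
      · subst h; rw [Pi.single_eq_same]
        simpa using degreeOf_C (1:ℝ) i
      · simp [Pi.single_eq_of_ne h]
    · rw [if_neg hc, if_neg (fun hcc => hc ((Equiv.eq_symm_apply σ).mp hcc))]
      exact hJd _ _ _
  refine (Finset.sum_le_sum fun c _ => hb c).trans ?_
  have hsum : (∑ x : Fin n, if x = σ.symm l then 0 else p) = (n - 1) * p := by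
    rw [Finset.sum_ite, Finset.sum_const, Finset.sum_const, smul_eq_mul, smul_eq_mul,
      mul_zero, zero_add]
    congr 1
    rw [Finset.filter_ne', Finset.card_erase_of_mem (Finset.mem_univ _), Finset.card_univ,
      Fintype.card_fin]
  rw [hsum]

/- ### Auxiliary lemmas on the shift substitution -/

lemma aux_degreeOf_aeval_shift {n : ℕ} {S : Type*} [CommRing S] [Algebra ℝ S] [Nontrivial S]
    (c : Fin n → S) (P : MvPolynomial (Fin n) ℝ) (i : Fin n) :
    degreeOf i (aeval (fun j => X j + C (c j)) P) ≤ degreeOf i P := by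
  classical
  conv_lhs => rw [P.as_sum]
  rw [map_sum]
  refine (degreeOf_sum_le _ _ _).trans (Finset.sup_le fun s hs => ?_)
  rw [aeval_monomial]
  refine (degreeOf_mul_le _ _ _).trans ?_
  rw [MvPolynomial.algebraMap_apply, degreeOf_C, zero_add]
  refine le_trans ?_ (monomial_le_degreeOf i hs)
  rw [Finsupp.prod]
  refine (degreeOf_prod_le _ _ _).trans ?_
  have hb : ∀ j, degreeOf i ((X j + C (c j)) ^ s j) ≤ if i = j then s j else 0 := by
    intro j
    refine (degreeOf_pow_le _ _ _).trans ?_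
    have h1 : degreeOf i (X j + C (c j)) ≤ if i = j then 1 else 0 := by
      refine (degreeOf_add_le _ _ _).trans ?_
      rw [degreeOf_C, degreeOf_X]
      simp
    calc s j * degreeOf i (X j + C (c j)) ≤ s j * (if i = j then 1 else 0) :=
          Nat.mul_le_mul_left _ h1
      _ = if i = j then s j else 0 := by split <;> simp
  refine (Finset.sum_le_sum fun j _ => hb j).trans ?_
  rw [Finset.sum_ite_eq]
  split <;> simp

lemma aux_eval_aeval_shift {n : ℕ} (y x : Fin n → ℝ) (P : MvPolynomial (Fin n) ℝ) :
    eval x (aeval (fun j => X j + C (y j)) P) = eval (x + y) P := by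
  induction P using MvPolynomial.induction_on with
  | C a => simp
  | add p q hp hq => simp only [map_add, eval_add, hp, hq]
  | mul_X p j hp =>
      simp only [map_mul, eval_mul, hp, aeval_X, eval_add, eval_X, eval_C, Pi.add_apply]

lemma aux_map_aeval_shift {n : ℕ} (y : Fin n → ℝ) (P : MvPolynomial (Fin n) ℝ) :
    map (eval y) (aeval (fun j => (X j : MvPolynomial (Fin n) (MvPolynomial (Fin n) ℝ))
        + C (X j)) P) = aeval (fun j => X j + C (y j)) P := by
  induction P using MvPolynomial.induction_on with
  | C a => simp [MvPolynomial.algebraMap_apply]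
  | add p q hp hq => simp only [map_add, hp, hq]
  | mul_X p j hp =>
      simp only [map_mul, hp, aeval_X, map_add, map_X, map_C, eval_X]

lemma aux_eval_expand {n : ℕ} (F : Finset (Fin n →₀ ℕ)) (Q : MvPolynomial (Fin n) ℝ)
    (hQ : Q.support ⊆ F) (x : Fin n → ℝ) :
    eval x Q = ∑ s ∈ F, coeff s Q * ∏ i, x i ^ s i := by
  rw [eval_eq']
  exact Finset.sum_subset hQ fun s _ hs => by
    rw [MvPolynomial.notMem_support_iff.mp hs, zero_mul]

/- ### Auxiliary lemmas on B-splines -/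

lemma aux_knot_mem (m p : ℕ) (hm : p + 1 ≤ m) (i : ℕ) :
    0 ≤ openUniformKnot m p i ∧ openUniformKnot m p i ≤ 1 := by
  unfold openUniformKnot
  have hden : (0:ℝ) < (m:ℝ) - p := by
    have : (p:ℝ) + 1 ≤ (m:ℝ) := by exact_mod_cast hm
    linarith
  split_ifs with h1 h2
  · norm_num
  · norm_num
  · push_neg at h1 h2
    have hi1 : (p:ℝ) + 1 + 1 ≤ (i:ℝ) := by exact_mod_cast h1
    have hi2 : (i:ℝ) ≤ (m:ℝ) := by exact_mod_cast Nat.lt_succ_iff.mp h2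
    constructor
    · apply div_nonneg _ hden.le; linarith
    · rw [div_le_one hden]; linarith

lemma aux_bspline_support (ξ : ℕ → ℝ) (hξ : ∀ i, 0 ≤ ξ i ∧ ξ i ≤ 1) :
    ∀ q k x, bspline ξ q k x ≠ 0 → 0 ≤ x ∧ x ≤ 1 := by
  intro q
  induction q with
  | zero =>
    intro k x h
    rw [bspline] at h
    split_ifs at h with hc
    · rcases hc with ⟨h1, h2⟩ | ⟨_, _, h3⟩
      · exact ⟨(hξ k).1.trans h1, h2.le.trans (hξ (k+1)).2⟩
      · rw [h3]; norm_num
    · exact absurd rfl h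
  | succ q ih =>
    intro k x h
    rw [bspline] at h
    have hor : (if ξ (k + q + 1) = ξ k then (0:ℝ)
        else (x - ξ k) / (ξ (k + q + 1) - ξ k) * bspline ξ q k x) ≠ 0
        ∨ (if ξ (k + q + 2) = ξ (k + 1) then (0:ℝ)
        else (ξ (k + q + 2) - x) / (ξ (k + q + 2) - ξ (k + 1)) * bspline ξ q (k + 1) x) ≠ 0 := by
      by_contra hc
      push_neg at hc
      rw [hc.1, hc.2, add_zero] at h
      exact h rfl
    rcases hor with h1 | h1 <;> [skip; skip] <;>
    · split_ifs at h1 with hc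
      · exact absurd rfl h1
      · exact ih _ _ (right_ne_zero_of_mul h1)

lemma aux_bspline_measurable (ξ : ℕ → ℝ) : ∀ q k, Measurable (bspline ξ q k) := by
  intro q
  induction q with
  | zero =>
    intro k
    have hset : MeasurableSet {x : ℝ | (ξ k ≤ x ∧ x < ξ (k + 1))
        ∨ (ξ k < ξ (k + 1) ∧ ξ (k + 1) = 1 ∧ x = 1)} := by
      refine MeasurableSet.union ?_ ?_
      · exact measurableSet_Ico
      · show MeasurableSet {x : ℝ | ξ k < ξ (k + 1) ∧ ξ (k + 1) = 1 ∧ x = 1}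
        by_cases hc : ξ k < ξ (k + 1) ∧ ξ (k + 1) = 1
        · have : {x : ℝ | ξ k < ξ (k + 1) ∧ ξ (k + 1) = 1 ∧ x = 1} = {1} := by
            ext x
            simp only [Set.mem_setOf_eq, Set.mem_singleton_iff]
            exact ⟨fun h => h.2.2, fun h => ⟨hc.1, hc.2, h⟩⟩
          rw [this]; exact measurableSet_singleton 1
        · have : {x : ℝ | ξ k < ξ (k + 1) ∧ ξ (k + 1) = 1 ∧ x = 1} = ∅ := by
            ext x; simp only [Set.mem_setOf_eq, Set.mem_empty_iff_false, iff_false]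
            intro hx; exact hc ⟨hx.1, hx.2.1⟩
          rw [this]; exact MeasurableSet.empty
    have : bspline ξ 0 k = fun x => if (ξ k ≤ x ∧ x < ξ (k + 1))
        ∨ (ξ k < ξ (k + 1) ∧ ξ (k + 1) = 1 ∧ x = 1) then (1:ℝ) else 0 := by
      funext x; rw [bspline]
    rw [this]
    exact Measurable.ite hset measurable_const measurable_const
  | succ q ih =>
    intro k
    have : bspline ξ (q+1) k = fun x =>
      (if ξ (k + q + 1) = ξ k then (0:ℝ)
        else (x - ξ k) / (ξ (k + q + 1) - ξ k) * bspline ξ q k x)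
      + (if ξ (k + q + 2) = ξ (k + 1) then (0:ℝ)
        else (ξ (k + q + 2) - x) / (ξ (k + q + 2) - ξ (k + 1)) * bspline ξ q (k + 1) x) := by
      funext x; rw [bspline]
    rw [this]
    refine Measurable.add ?_ ?_
    · by_cases hc : ξ (k + q + 1) = ξ k
      · simp only [if_pos hc]; exact measurable_const
      · simp only [if_neg hc]
        exact ((measurable_id.sub_const _).div_const _).mul (ih k)
    · by_cases hc : ξ (k + q + 2) = ξ (k + 1)
      · simp only [if_pos hc]; exact measurable_const
      · simp only [if_neg hc]
        exact ((measurable_const.sub measurable_id).div_const _).mul (ih (k+1))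

lemma aux_cardinalB_support (m p : ℕ) (hm : p + 1 ≤ m) {x : ℝ}
    (h : cardinalB m p x ≠ 0) : |x| ≤ 1 + |cardCenter m p (p + 1)| := by
  obtain ⟨h1, h2⟩ := aux_bspline_support _ (aux_knot_mem m p hm) _ _ _ h
  have ha := le_abs_self (cardCenter m p (p + 1))
  have hb := neg_abs_le (cardCenter m p (p + 1))
  rw [abs_le]
  constructor <;> linarith

lemma aux_bHat_support {n : ℕ} (m p : ℕ) (hm : p + 1 ≤ m) {y : Fin n → ℝ}
    (h : bHat n m p y ≠ 0) (t : Fin n) : |y t| ≤ 1 + |cardCenter m p (p + 1)| := by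
  apply aux_cardinalB_support m p hm
  intro h0
  exact h (Finset.prod_eq_zero (Finset.mem_univ t) h0)

lemma aux_bHat_measurable (n m p : ℕ) : Measurable (bHat n m p) := by
  apply Finset.measurable_prod
  intro i _
  exact ((aux_bspline_measurable _ _ _).comp (measurable_id.add_const _)).comp
    (measurable_pi_apply i)

/-- **Exact reproduction of the divergence matrix for Stokes flow.**  If the geometry map
`φ : Ω̂ → Ω` (`n = 2` or `3`) is a polynomial of coordinate degree `p`, then every entry
of the adjugate of its Jacobian — and in particular the trace `tr(adj(J))` — is a
polynomial in `Q_{(n−1)p}(Ω̂)`; consequently the surrogate divergence matrix `B̃` built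
from degree-`q` spline interpolation of the divergence stencil functions
`Φ_δ(x̃) = ∫_{ω̂_δ} Σ_{k,l} g_{kl}^δ(ŷ) · adj(J)_{kl}(x̃+ŷ) dŷ` coincides with the true
divergence matrix `B` whenever `q ≥ (n−1)p`. -/
theorem stmt_19 (n p q m : ℕ) (hp : 0 < p) (hn : n = 2 ∨ n = 3) (hm : 2 * p + 1 ≤ m)
    (hq : (n - 1) * p ≤ q)
    (φp : Fin n → MvPolynomial (Fin n) ℝ)
    (hφ : ∀ i j, (φp i).degreeOf j ≤ p)
    (J : Matrix (Fin n) (Fin n) (MvPolynomial (Fin n) ℝ))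
    (hJ : ∀ i j, J i j = MvPolynomial.pderiv j (φp i))
    -- the `ŷ`-dependent factors of the divergence integrand (pressure basis times
    -- velocity-gradient basis), supported in `ω̂_δ` and integrable
    (g : (Fin n → ℤ) → Fin n → Fin n → (Fin n → ℝ) → ℝ)
    (hgsupp : ∀ d k l y, (bHat n m p y = 0 ∨
      bHat n m p (y - fun i => (d i : ℝ) * (1 / ((m : ℝ) - p))) = 0) → g d k l y = 0)
    (hgint : ∀ d k l, MeasureTheory.Integrable (g d k l))
    (Φ : (Fin n → ℤ) → (Fin n → ℝ) → ℝ)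
    (hΦ : ∀ d : Fin n → ℤ, Φ d = fun xt => ∫ y in
        ({y | bHat n m p y ≠ 0} ∩
          {y | bHat n m p (y - fun i => (d i : ℝ) * (1 / ((m : ℝ) - p))) ≠ 0}),
        ∑ k, ∑ l, g d k l y * MvPolynomial.eval (xt + y) (J.adjugate k l)) :
    -- (1) the adjugate entries and its trace lie in `Q_{(n−1)p}(Ω̂)`
    (∀ k l i, (J.adjugate k l).degreeOf i ≤ (n - 1) * p) ∧
    (∀ i, (Matrix.trace J.adjugate).degreeOf i ≤ (n - 1) * p) ∧
    -- (2) the surrogate divergence matrix coincides with the true divergence matrix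
    (∀ Pr : ((Fin n → ℝ) → ℝ) → ((Fin n → ℝ) → ℝ),
      (∀ S : MvPolynomial (Fin n) ℝ, (∀ i, S.degreeOf i ≤ q) →
        ∀ x ∈ tildeOmega n m p, Pr (fun z => MvPolynomial.eval z S) x =
          MvPolynomial.eval x S) →
      ∀ B : ((Fin n → ℕ) → (Fin n → ℕ) → ℝ),
        (∀ i j : Fin n → ℕ,
          ((∀ t, i t ∈ Finset.Icc (p + 1) (m - p)) ∧ (∀ t, j t ∈ Finset.Icc (p + 1) (m - p)) ∧
            (fun t => cardCenter m p (i t)) ∈ tildeOmega n m p ∧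
            (fun t => cardCenter m p (j t)) ∈ tildeOmega n m p) →
          B i j = Φ (fun t => (j t : ℤ) - (i t : ℤ)) (fun t => cardCenter m p (i t))) →
        (fun i j : Fin n → ℕ =>
          if ((∀ t, i t ∈ Finset.Icc (p + 1) (m - p)) ∧ (∀ t, j t ∈ Finset.Icc (p + 1) (m - p)) ∧
              (fun t => cardCenter m p (i t)) ∈ tildeOmega n m p ∧
              (fun t => cardCenter m p (j t)) ∈ tildeOmega n m p)
          then Pr (Φ (fun t => (j t : ℤ) - (i t : ℤ))) (fun t => cardCenter m p (i t))
          else B i j) = B) := by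
  have hadj : ∀ k l i, degreeOf i (J.adjugate k l) ≤ (n - 1) * p := by
    intro k l i
    refine aux_adjugate_degreeOf p J (fun a b c => ?_) k l i
    rw [hJ a b]
    exact (aux_degreeOf_pderiv_le _ _ _).trans (hφ a c)
  have htr : ∀ i, degreeOf i (Matrix.trace J.adjugate) ≤ (n - 1) * p := by
    intro i
    rw [Matrix.trace]
    exact (degreeOf_sum_le _ _ _).trans (Finset.sup_le fun k _ => hadj k k i)
  refine ⟨hadj, htr, ?_⟩
  intro Pr hPr B hB
  -- the key step: each stencil function is (globally) a polynomial of coordinate degree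
  -- at most (n-1)p
  have key : ∀ d : Fin n → ℤ, ∃ S : MvPolynomial (Fin n) ℝ,
      (∀ i, S.degreeOf i ≤ (n - 1) * p) ∧ Φ d = fun z => MvPolynomial.eval z S := by
    intro d
    set c : Fin n → ℝ := fun t => (d t : ℝ) * (1 / ((m : ℝ) - p)) with hc
    set A : Set (Fin n → ℝ) := {y | bHat n m p y ≠ 0} ∩
        {y | bHat n m p (y - fun i => (d i : ℝ) * (1 / ((m : ℝ) - p))) ≠ 0} with hA
    have hm' : p + 1 ≤ m := by omega
    -- A is contained in a compact box
    set R : ℝ := 1 + |cardCenter m p (p + 1)| with hR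
    set K : Set (Fin n → ℝ) := Set.Icc (fun _ => -R) (fun _ => R) with hK
    have hAK : A ⊆ K := by
      intro y hy
      rw [hK, Set.mem_Icc]
      constructor <;> intro t
      · exact (abs_le.mp (aux_bHat_support m p hm' hy.1 t)).1
      · exact (abs_le.mp (aux_bHat_support m p hm' hy.1 t)).2
    have hKcomp : IsCompact K := isCompact_Icc
    have hKmeas : MeasurableSet K := measurableSet_Icc
    -- shifted polynomials
    set W : Fin n → Fin n → MvPolynomial (Fin n) (MvPolynomial (Fin n) ℝ) :=
      fun k l => aeval (fun j => X j + C (X j)) (J.adjugate k l) with hW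
    set bnd : Fin n →₀ ℕ := Finsupp.equivFunOnFinite.symm (fun _ => (n - 1) * p) with hbnd
    have hbnd' : ∀ t, bnd t = (n - 1) * p := fun t => rfl
    set F : Finset (Fin n →₀ ℕ) := Finset.Iic bnd with hF
    have hWF : ∀ k l, (W k l).support ⊆ F := by
      intro k l s hs
      rw [hF, Finset.mem_Iic]
      rw [Finsupp.le_def]
      intro t
      rw [hbnd' t]
      exact (monomial_le_degreeOf t hs).trans
        ((aux_degreeOf_aeval_shift _ _ _).trans (hadj k l t))
    -- coefficient functions
    set cf : Fin n → Fin n → (Fin n →₀ ℕ) → (Fin n → ℝ) → ℝ :=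
      fun k l s y => eval y (coeff s (W k l)) with hcf
    have hcf_cont : ∀ k l s, Continuous (cf k l s) :=
      fun k l s => MvPolynomial.continuous_eval _
    -- expansion of the shifted adjugate entries
    have hexpand : ∀ (x y : Fin n → ℝ) (k l : Fin n),
        eval (x + y) (J.adjugate k l) = ∑ s ∈ F, cf k l s y * ∏ t, x t ^ s t := by
      intro x y k l
      rw [← aux_eval_aeval_shift y x, ← aux_map_aeval_shift y,
        aux_eval_expand F _ ((support_map_subset _ _).trans (hWF k l))]
      exact Finset.sum_congr rfl fun s _ => by rw [coeff_map]
    -- integrability of the coefficient times g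
    have hint : ∀ k l s, Integrable (fun y => cf k l s y * g d k l y)
        (volume.restrict A) := by
      intro k l s
      obtain ⟨Cb, hCb⟩ := hKcomp.exists_bound_of_continuousOn (hcf_cont k l s).continuousOn
      refine Integrable.bdd_mul (c := Cb) ((hgint d k l).restrict)
        (hcf_cont k l s).aestronglyMeasurable ?_
      exact Filter.Eventually.filter_mono (ae_mono (Measure.restrict_mono hAK le_rfl))
        (ae_restrict_of_forall_mem hKmeas hCb)
    -- pointwise rearrangement
    have point : ∀ x y : Fin n → ℝ,
        (∑ k, ∑ l, g d k l y * MvPolynomial.eval (x + y) (J.adjugate k l))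
        = ∑ s ∈ F, (∑ k, ∑ l, cf k l s y * g d k l y) * ∏ t, x t ^ s t := by
      intro x y
      calc (∑ k, ∑ l, g d k l y * MvPolynomial.eval (x + y) (J.adjugate k l))
          = ∑ k, ∑ l, ∑ s ∈ F, cf k l s y * g d k l y * ∏ t, x t ^ s t := by
            refine Finset.sum_congr rfl fun k _ => Finset.sum_congr rfl fun l _ => ?_
            rw [hexpand x y k l, Finset.mul_sum]
            exact Finset.sum_congr rfl fun s _ => by ring
        _ = ∑ k, ∑ s ∈ F, ∑ l, cf k l s y * g d k l y * ∏ t, x t ^ s t :=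
            Finset.sum_congr rfl fun k _ => Finset.sum_comm
        _ = ∑ s ∈ F, ∑ k, ∑ l, cf k l s y * g d k l y * ∏ t, x t ^ s t := Finset.sum_comm
        _ = ∑ s ∈ F, (∑ k, ∑ l, cf k l s y * g d k l y) * ∏ t, x t ^ s t := by
            refine Finset.sum_congr rfl fun s _ => ?_
            rw [Finset.sum_mul]
            exact Finset.sum_congr rfl fun k _ => (Finset.sum_mul _ _ _).symm
    -- the polynomial
    refine ⟨∑ s ∈ F, monomial s (∫ y in A, ∑ k, ∑ l, cf k l s y * g d k l y), ?_, ?_⟩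
    · intro i
      refine (degreeOf_sum_le _ _ _).trans (Finset.sup_le fun s hs => ?_)
      refine (aux_degreeOf_monomial_le _ _ _).trans ?_
      rw [hF, Finset.mem_Iic] at hs
      exact (Finsupp.le_def.mp hs i).trans_eq (hbnd' i)
    · funext z
      rw [hΦ d]
      show (∫ y in A, ∑ k, ∑ l, g d k l y * MvPolynomial.eval (z + y) (J.adjugate k l)) = _
      rw [integral_congr_ae (Filter.Eventually.of_forall fun y => point z y)]
      rw [integral_finset_sum F (fun s _ =>
        (integrable_finset_sum Finset.univ fun k _ =>
          integrable_finset_sum Finset.univ fun l _ => hint k l s).mul_const _)]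
      rw [map_sum (eval z)]
      refine (Finset.sum_congr rfl fun s _ => ?_).symm
      rw [eval_monomial, Finsupp.prod_pow, integral_mul_const]
  -- conclude
  funext i j
  show (if _ then _ else _) = B i j
  by_cases hcond : (∀ t, i t ∈ Finset.Icc (p + 1) (m - p)) ∧
      (∀ t, j t ∈ Finset.Icc (p + 1) (m - p)) ∧
      (fun t => cardCenter m p (i t)) ∈ tildeOmega n m p ∧
      (fun t => cardCenter m p (j t)) ∈ tildeOmega n m p
  · rw [if_pos hcond, hB i j hcond]
    obtain ⟨S, hS1, hS2⟩ := key fun t => (j t : ℤ) - (i t : ℤ)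
    rw [hS2]
    exact hPr S (fun t => (hS1 t).trans hq) _ hcond.2.2.1
  · rw [if_neg hcond]
end
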